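/- arXiv:1808.06314 — 6 statements merged into one kernel-verified Lean document; each statement's English description precedes it below -/
import Mathlib

section
/- Let M ⊆ [0,∞] be a closed set containing ∞, let η ∈ M with η < ∞, and let φ : [0,∞] × [0,∞) → ℝ satisfy: (i) for each t ∈ M, the map m ↦ φ(t,m) is nonincreasing and continuous on [0,∞); (ii) φ is left-continuous along M: whenever (t_n) is a nondecreasing sequence in M with t_n → t, then φ(t_n, m) → φ(t, m) for every m ≥ 0. For m ≥ 0 define σ(m) = inf{ t ∈ M : t ≥ η and φ(t, m) ≤ 0 }, and assume the infimum is attained for every m, i.e. σ(m) ∈ M and φ(σ(m), m) ≤ 0. Then σ : [0,∞) → [η, ∞] is nonincreasing and right-continuous. -/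
open Set Filter Topology
open scoped ENNReal

/-!
The stopping sets `{t ∈ M | η ≤ t, φ(t, m) ≤ 0}` grow with `m`, so their infima `σ(m)` decrease.
For right-continuity at `m`, let `L` be the right limit of `σ` at `m`, so `L ≤ σ(m)`, and take
`uₙ ↓ m`. Then `σ(uₙ) ↑ L` inside the closed set `M`, and since `φ(σ(uₙ), uₖ) ≤ φ(σ(uₙ), uₙ) ≤ 0`
for `n ≥ k`, left-continuity of `φ` along `M` gives `φ(L, uₖ) ≤ 0`; continuity in `m` then gives
`φ(L, m) ≤ 0`. Hence `L` lies in the stopping set at `m` and `σ(m) ≤ L`.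
-/

theorem le_of_tendsto_of_forall_diag_le {α β γ : Type*} [Preorder β] [TopologicalSpace β]
    [TopologicalSpace γ] [Preorder γ] [ClosedIicTopology γ]
    {φ : α → β → γ} {s : Set β} {t : ℕ → α} {u : ℕ → β} {L : α} {m : β} {c : γ}
    (hanti : ∀ n, AntitoneOn (φ (t n)) s) (hcont : ContinuousWithinAt (φ L) s m)
    (hlim : ∀ k, Tendsto (fun n => φ (t n) (u k)) atTop (𝓝 (φ L (u k))))
    (hu : Antitone u) (hus : ∀ n, u n ∈ s) (hum : Tendsto u atTop (𝓝[s] m))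
    (hdiag : ∀ n, φ (t n) (u n) ≤ c) : φ L m ≤ c := by
  have hLu : ∀ k, φ L (u k) ≤ c := fun k =>
    le_of_tendsto (hlim k) <| (eventually_ge_atTop k).mono fun n hkn =>
      (hanti n (hus n) (hus k) (hu hkn)).trans (hdiag n)
  exact le_of_tendsto (hcont.tendsto.comp hum) (Eventually.of_forall hLu)

theorem le_of_eq_sInf {α β γ : Type*} [CompleteLattice α] [LE γ]
    {M : Set α} {η : α} {φ : α → β → γ} {c : γ} {σ : β → α}
    (hσ : ∀ m, σ m = sInf {t | t ∈ M ∧ η ≤ t ∧ φ t m ≤ c}) (m : β) : η ≤ σ m := by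
  rw [hσ]
  exact le_sInf fun t ht => ht.2.1

theorem antitoneOn_of_eq_sInf {α β γ : Type*} [CompleteLattice α] [Preorder β] [Preorder γ]
    {M : Set α} {η : α} {φ : α → β → γ} {c : γ} {s : Set β} {σ : β → α}
    (hσ : ∀ m, σ m = sInf {t | t ∈ M ∧ η ≤ t ∧ φ t m ≤ c})
    (hφ : ∀ t ∈ M, AntitoneOn (φ t) s) : AntitoneOn σ s := by
  intro a ha b hb hab
  rw [hσ, hσ]
  exact sInf_le_sInf fun t ⟨htM, hηt, hφt⟩ => ⟨htM, hηt, (hφ t htM ha hb hab).trans hφt⟩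

theorem continuousWithinAt_Ici_of_eq_sInf {M : Set ℝ≥0∞} (hM : IsClosed M) {η : ℝ≥0∞}
    {φ : ℝ≥0∞ → ℝ → ℝ}
    (hφanti : ∀ t ∈ M, AntitoneOn (φ t) (Ici 0)) (hφcont : ∀ t ∈ M, ContinuousOn (φ t) (Ici 0))
    (hφqlc : ∀ (tn : ℕ → ℝ≥0∞) (t : ℝ≥0∞), (∀ n, tn n ∈ M) → Monotone tn →
      Tendsto tn atTop (𝓝 t) → ∀ m : ℝ, 0 ≤ m → Tendsto (fun n => φ (tn n) m) atTop (𝓝 (φ t m)))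
    {σ : ℝ → ℝ≥0∞} (hσ : ∀ m, σ m = sInf {t | t ∈ M ∧ η ≤ t ∧ φ t m ≤ 0})
    (hσattained : ∀ m, 0 ≤ m → σ m ∈ M ∧ φ (σ m) m ≤ 0) {m : ℝ} (hm : 0 ≤ m) :
    ContinuousWithinAt σ (Ici m) m := by
  have hσanti : AntitoneOn σ (Ici 0) := antitoneOn_of_eq_sInf hσ hφanti
  have hIoi : Ioi m ⊆ Ici 0 := fun x hx => hm.trans (le_of_lt hx)
  set L := sSup (σ '' Ioi m)
  have hσL : Tendsto σ (𝓝[>] m) (𝓝 L) :=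
    (hσanti.mono hIoi).tendsto_nhdsGT (OrderTop.bddAbove _)
  obtain ⟨u, hu, hmu, hum⟩ := exists_seq_strictAnti_tendsto_nhdsWithin m
  have hu0 : ∀ n, 0 ≤ u n := fun n => hm.trans (hmu n).le
  have hσu : Monotone (σ ∘ u) := fun a b hab => hσanti (hu0 b) (hu0 a) (hu.antitone hab)
  have hσuL : Tendsto (σ ∘ u) atTop (𝓝 L) := hσL.comp hum
  have hσuM : ∀ n, σ (u n) ∈ M := fun n => (hσattained _ (hu0 n)).1
  have hLM : L ∈ M := hM.mem_of_tendsto hσuL (Eventually.of_forall hσuM)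
  have hφL : φ L m ≤ 0 :=
    le_of_tendsto_of_forall_diag_le (fun n => hφanti _ (hσuM n)) (hφcont L hLM m hm)
      (fun k => hφqlc _ L hσuM hσu hσuL (u k) (hu0 k)) hu.antitone hu0
      (tendsto_nhdsWithin_mono_right hIoi hum)
      (fun n => (hσattained _ (hu0 n)).2)
  have hηL : η ≤ L := calc
    η ≤ σ (u 0) := le_of_eq_sInf hσ _
    _ ≤ L := hσu.ge_of_tendsto hσuL 0
  have hσmL : σ m ≤ L := by rw [hσ]; exact sInf_le ⟨hLM, hηL, hφL⟩
  have hLσm : L ≤ σ m := sSup_le <| forall_mem_image.2 fun x hx =>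
    hσanti hm (hIoi hx) (le_of_lt hx)
  rw [← continuousWithinAt_Ioi_iff_Ici, ContinuousWithinAt, le_antisymm hσmL hLσm]
  exact hσL

theorem gittins_sigma_antitone_rightContinuous_general
    (M : Set ℝ≥0∞) (hMclosed : IsClosed M)
    (η : ℝ≥0∞)
    (φ : ℝ≥0∞ → ℝ → ℝ)
    (hφanti : ∀ t ∈ M, AntitoneOn (φ t) (Ici (0:ℝ)))
    (hφcont : ∀ t ∈ M, ContinuousOn (φ t) (Ici (0:ℝ)))
    (hφqlc : ∀ (tn : ℕ → ℝ≥0∞) (t : ℝ≥0∞), (∀ n, tn n ∈ M) → Monotone tn →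
      Tendsto tn atTop (𝓝 t) → ∀ m : ℝ, 0 ≤ m →
        Tendsto (fun n => φ (tn n) m) atTop (𝓝 (φ t m)))
    (σ : ℝ → ℝ≥0∞)
    (hσdef : ∀ m : ℝ, σ m = sInf {t | t ∈ M ∧ η ≤ t ∧ φ t m ≤ 0})
    (hσattained : ∀ m : ℝ, 0 ≤ m → σ m ∈ M ∧ φ (σ m) m ≤ 0) :
    (∀ m : ℝ, 0 ≤ m → η ≤ σ m) ∧
    AntitoneOn σ (Ici (0:ℝ)) ∧
    (∀ m : ℝ, 0 ≤ m → ContinuousWithinAt σ (Ici m) m) :=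
  ⟨fun m _ => le_of_eq_sInf hσdef m,
    antitoneOn_of_eq_sInf hσdef hφanti,
    fun _ hm => continuousWithinAt_Ici_of_eq_sInf hMclosed hφanti hφcont hφqlc hσdef hσattained hm⟩

/-- Lemma 3.1 of the paper, pathwise form.
`σ(m) = inf{ t ∈ M : t ≥ η, φ(t,m) ≤ 0 }` is nonincreasing and right-continuous in `m`. -/
theorem gittins_sigma_antitone_rightContinuous
    (M : Set ℝ≥0∞) (hMclosed : IsClosed M) (hMtop : ∞ ∈ M)
    (η : ℝ≥0∞) (hηM : η ∈ M) (hηfin : η < ∞)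
    (φ : ℝ≥0∞ → ℝ → ℝ)
    (hφanti : ∀ t ∈ M, AntitoneOn (φ t) (Ici (0:ℝ)))
    (hφcont : ∀ t ∈ M, ContinuousOn (φ t) (Ici (0:ℝ)))
    (hφqlc : ∀ (tn : ℕ → ℝ≥0∞) (t : ℝ≥0∞), (∀ n, tn n ∈ M) → Monotone tn →
      Tendsto tn atTop (𝓝 t) → ∀ m : ℝ, 0 ≤ m →
        Tendsto (fun n => φ (tn n) m) atTop (𝓝 (φ t m)))
    (σ : ℝ → ℝ≥0∞)
    (hσdef : ∀ m : ℝ, σ m = sInf {t | t ∈ M ∧ η ≤ t ∧ φ t m ≤ 0})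
    (hσattained : ∀ m : ℝ, 0 ≤ m → σ m ∈ M ∧ φ (σ m) m ≤ 0) :
    (∀ m : ℝ, 0 ≤ m → η ≤ σ m) ∧
    AntitoneOn σ (Ici (0:ℝ)) ∧
    (∀ m : ℝ, 0 ≤ m → ContinuousWithinAt σ (Ici m) m) :=
  gittins_sigma_antitone_rightContinuous_general M hMclosed η φ hφanti hφcont hφqlc σ hσdef
    hσattained
end

section
/- Let F = (F_t)_{t≥0} be a filtration on a probability space, let η be an F-stopping time, and for each m ≥ 0 let σ(m) be an F-stopping time such that σ(m) ≥ η everywhere and, pathwise, m ↦ σ(m)(ω) is nonincreasing and right-continuous. Define M̲_η(t)(ω) = sup{ m ≥ 0 : σ(m)(ω) > t } if t ≥ η(ω) (with sup ∅ = 0) and M̲_η(t)(ω) = ∞ if t < η(ω). Then for every t ≥ 0 the random variable M̲_η(t) is F_t-measurable; in particular the process (M̲_η(t))_{t≥0} is F-adapted. -/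
open Set Filter Topology MeasureTheory
open scoped ENNReal NNReal

/-!
By monotonicity of `m ↦ σ m ω`, the set `{m ≥ 0 | t < σ m ω}` is an initial segment of `[0, ∞)`,
so its supremum is already attained along the rationals. Hence for `t ≥ η` the envelope is a
countable supremum of the constants `q` on the `F t`-measurable events `{t < σ q}`, and the case
split on `{η ≤ t}` is itself an `F t`-event.
-/

theorem ENNReal.iSup_ofReal_eq_iSup_rat {S : Set ℝ}
    (hS : ∀ m ∈ S, ∀ q, 0 ≤ q → q ≤ m → q ∈ S) :
    ⨆ m ∈ S, ENNReal.ofReal m = ⨆ (q : ℚ) (_ : (q : ℝ) ∈ S), ENNReal.ofReal q := by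
  refine le_antisymm (iSup₂_le fun m hm => ?_)
    (iSup₂_le fun q hq => le_iSup₂_of_le (q : ℝ) hq le_rfl)
  refine le_of_forall_lt fun c hc => ?_
  obtain ⟨q, hq0, hcq, hqm⟩ := ENNReal.lt_iff_exists_rat_btwn.1 hc
  have hqm' : (q : ℝ) ≤ m := ((ENNReal.ofReal_lt_ofReal_iff'.1 hqm).1).le
  exact hcq.trans_le (le_iSup₂_of_le q (hS m hm q (by exact_mod_cast hq0) hqm') le_rfl)

theorem measurable_iSup_const_of_measurableSet {Ω ι : Type*} {m : MeasurableSpace Ω} [Countable ι]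
    {A : ι → Set Ω} (hA : ∀ i, MeasurableSet (A i)) (c : ι → ℝ≥0∞) :
    Measurable fun ω => ⨆ (i) (_ : ω ∈ A i), c i := by
  refine Measurable.iSup fun i => ?_
  convert (measurable_const (a := c i)).indicator (hA i) using 1
  ext ω
  by_cases h : ω ∈ A i <;> simp [h]

theorem lowerEnvelope_adapted_general
    {Ω : Type*} {m0 : MeasurableSpace Ω}
    (F : Filtration ℝ≥0∞ m0)
    (η : Ω → ℝ≥0∞) (hη : IsStoppingTime F (fun ω => (η ω : WithTop ℝ≥0∞)))
    (σ : ℝ → Ω → ℝ≥0∞)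
    (hσstop : ∀ m : ℝ, 0 ≤ m → IsStoppingTime F (fun ω => (σ m ω : WithTop ℝ≥0∞)))
    (hσanti : ∀ ω, AntitoneOn (fun m => σ m ω) (Ici (0:ℝ)))
    (Mlow : ℝ≥0∞ → Ω → ℝ≥0∞)
    (hMlow : ∀ (t : ℝ≥0∞) (ω : Ω), Mlow t ω =
      if η ω ≤ t then ⨆ m ∈ {m : ℝ | 0 ≤ m ∧ t < σ m ω}, ENNReal.ofReal m else ∞) :
    ∀ t : ℝ≥0∞, Measurable[F t] (Mlow t) := by
  intro t
  have hMlow_rat : Mlow t = fun ω => if η ω ≤ t then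
      ⨆ (q : ℚ) (_ : ω ∈ {ω | 0 ≤ (q : ℝ) ∧ t < σ q ω}), ENNReal.ofReal q else ∞ := by
    ext ω
    rw [hMlow, ENNReal.iSup_ofReal_eq_iSup_rat]
    · rfl
    · exact fun m ⟨hm0, hm⟩ q hq0 hqm => ⟨hq0, hm.trans_le (hσanti ω hq0 hm0 hqm)⟩
  have hσ_gt : ∀ q : ℚ, MeasurableSet[F t] {ω | 0 ≤ (q : ℝ) ∧ t < σ q ω} := by
    intro q
    by_cases hq : 0 ≤ (q : ℝ)
    · simpa [hq] using (hσstop q hq).measurableSet_gt t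
    · simp [hq]
  rw [hMlow_rat]
  exact Measurable.ite (by simpa using hη.measurableSet_le t)
    (measurable_iSup_const_of_measurableSet (m := F t) hσ_gt _) measurable_const

/-- Lemma 3.2(a) of the paper. The pathwise inverse
`M̲_η(t) = sup{ m ≥ 0 : σ(m) > t }` for `t ≥ η` (and `= ∞` for `t < η`) of a pathwise
nonincreasing, right-continuous family of stopping times `σ(m) ≥ η` is `F_t`-measurable
for every `t`; in particular it defines an adapted process. -/
theorem lowerEnvelope_adapted
    {Ω : Type*} {m0 : MeasurableSpace Ω} (P : MeasureTheory.Measure Ω)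
    [IsProbabilityMeasure P]
    (F : Filtration ℝ≥0∞ m0)
    (η : Ω → ℝ≥0∞) (hη : IsStoppingTime F (fun ω => (η ω : WithTop ℝ≥0∞)))
    (σ : ℝ → Ω → ℝ≥0∞)
    (hσstop : ∀ m : ℝ, 0 ≤ m → IsStoppingTime F (fun ω => (σ m ω : WithTop ℝ≥0∞)))
    (hσge : ∀ m : ℝ, 0 ≤ m → ∀ ω, η ω ≤ σ m ω)
    (hσanti : ∀ ω, AntitoneOn (fun m => σ m ω) (Ici (0:ℝ)))
    (hσrc : ∀ ω, ∀ m : ℝ, 0 ≤ m → ContinuousWithinAt (fun m' => σ m' ω) (Ici m) m)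
    (Mlow : ℝ≥0∞ → Ω → ℝ≥0∞)
    (hMlow : ∀ (t : ℝ≥0∞) (ω : Ω), Mlow t ω =
      if η ω ≤ t then ⨆ m ∈ {m : ℝ | 0 ≤ m ∧ t < σ m ω}, ENNReal.ofReal m else ∞) :
    ∀ t : ℝ≥0∞, Measurable[F t] (Mlow t) :=
  lowerEnvelope_adapted_general F η hη σ hσstop hσanti Mlow hMlow
end

section
/- Lemma (Gittins index as maximal reward rate). Let η ∈ 𝓜 be a finite stopping time and m ≥ 0. Then V_q(η, m) ≤ βm · E[∫_η^∞ e^{-β(u−η)} q_u du | F_η] a.s. if and only if for every stopping time τ ∈ 𝓜 with τ > η a.s. one has E[∫_η^τ e^{-βu} q_u X_u du | F_η] ≤ βm · E[∫_η^τ e^{-βu} q_u du | F_η] a.s.; that is, the value of the retirement problem collapses to the retirement reward exactly when βm dominates every conditional reward rate E[∫_η^τ e^{-βu} q_u X_u du | F_η] / E[∫_η^τ e^{-βu} q_u du | F_η] over feasible stopping times τ > η. -/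
/-!
Compared with retiring at once, running the project up to a time `σ ≥ η` changes the payoff
by `∫_η^σ e^{-β(u-η)} q_u (X_u - βm) du`. Hence `V_q(η, m)` is the retirement reward exactly
when, for every feasible `σ`, the conditional reward `E[∫_η^σ e^{-β(u-η)} q_u X_u du | F_η]` is
at most `βm E[∫_η^σ e^{-β(u-η)} q_u du | F_η]`. This differs from the rate condition only by the
factor `e^{βη}` and by the class of stopping times, and `F_η`-measurable factors pull out of
`F_η`-conditional expectations, so each condition yields the other on `F_η`-measurable sets.
From the value to the rates, stop at `τ` on `{η ≤ n, η ≤ τ}` and at `η` elsewhere (there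
`e^{βη} ≤ e^{βn}` keeps everything integrable); from the rates to the value, stop at `τ` on
`{η < τ}` and never elsewhere, which is a feasible time strictly after `η`.
-/

open Set Filter Topology MeasureTheory
open scoped ENNReal NNReal

/-- The discounted integral `∫_a^b e^{-β(u - c)} f_u du` along a path, where the (random)
time interval `[a, b)` is cut out of `[0,∞)` by the `ℝ≥0∞`-valued times `a`, `b`,
and `c` is the (random) origin of the discounting. -/
noncomputable def discInt {Ω : Type*} (β : ℝ) (f : ℝ → Ω → ℝ)
    (a b : Ω → ℝ≥0∞) (c : Ω → ℝ) (ω : Ω) : ℝ :=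
  ∫ u in Ioi (0:ℝ),
    {u : ℝ | a ω ≤ ENNReal.ofReal u ∧ ENNReal.ofReal u < b ω}.indicator
      (fun u => Real.exp (-β * (u - c ω)) * f u ω) u

lemma integrableOn_exp_neg_mul_sub {β : ℝ} (hβ : 0 < β) (a c : ℝ) :
    IntegrableOn (fun u => Real.exp (-β * (u - c))) (Ioi a) := by
  refine IntegrableOn.congr_fun
    ((integrableOn_exp_mul_Ioi (neg_lt_zero.2 hβ) a).const_mul (Real.exp (β * c)))
    (fun u _ => ?_) measurableSet_Ioi
  rw [← Real.exp_add]; ring_nf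

lemma integral_exp_neg_mul_sub {β : ℝ} (hβ : 0 < β) (c : ℝ) :
    ∫ u in Ioi c, Real.exp (-β * (u - c)) = 1 / β := by
  have h : ∀ u, Real.exp (-β * (u - c)) = Real.exp (β * c) * Real.exp (-β * u) := fun u => by
    rw [← Real.exp_add]; ring_nf
  simp_rw [h, integral_const_mul, integral_exp_mul_Ioi (neg_lt_zero.2 hβ)]
  rw [neg_div_neg_eq, mul_div_assoc', ← Real.exp_add]
  simp

section DiscountedIntegral

variable {Ω : Type*} {β C : ℝ} {f : ℝ → Ω → ℝ} {a b : Ω → ℝ≥0∞} {c : Ω → ℝ} {ω : Ω}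

lemma discInt_nonneg (hf : ∀ u ω, 0 ≤ f u ω) (ω : Ω) : 0 ≤ discInt β f a b c ω :=
  setIntegral_nonneg measurableSet_Ioi fun u _ =>
    indicator_nonneg (fun u _ => mul_nonneg (Real.exp_nonneg _) (hf u ω)) u

lemma discInt_eq_zero_of_le (h : b ω ≤ a ω) : discInt β f a b c ω = 0 := by
  have : {u : ℝ | a ω ≤ ENNReal.ofReal u ∧ ENNReal.ofReal u < b ω} = ∅ :=
    eq_empty_of_forall_notMem fun u hu => (hu.2.trans_le (h.trans hu.1)).false
  simp [discInt, this]

lemma discInt_eq_exp_mul (ω : Ω) :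
    discInt β f a b c ω = Real.exp (β * c ω) * discInt β f a b (fun _ => 0) ω := by
  rw [discInt, discInt, ← integral_const_mul]
  congr 1 with u
  rw [← indicator_const_mul]
  congr 1 with v
  rw [← mul_assoc, ← Real.exp_add]
  ring_nf

lemma discInt_eq_indicator_mul {A : Set Ω} {b' : Ω → ℝ≥0∞} (hA : ∀ ω ∈ A, b ω = b' ω)
    (hAc : ∀ ω ∉ A, b ω ≤ a ω) :
    discInt β f a b c =
      A.indicator (fun ω => Real.exp (β * c ω)) * discInt β f a b' fun _ => 0 := by
  funext ω
  rw [Pi.mul_apply]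
  by_cases h : ω ∈ A
  · rw [indicator_of_mem h, discInt_eq_exp_mul]
    simp only [discInt, hA ω h]
  · rw [indicator_of_notMem h, zero_mul, discInt_eq_zero_of_le (hAc ω h)]

lemma discInt_add_discInt {d : Ω → ℝ≥0∞}
    (hf : IntegrableOn (fun u => Real.exp (-β * (u - c ω)) * f u ω) (Ioi 0))
    (hab : a ω ≤ b ω) (hbd : b ω ≤ d ω) :
    discInt β f a b c ω + discInt β f b d c ω = discInt β f a d c ω := by
  have hS : ∀ a b : Ω → ℝ≥0∞, {u : ℝ | a ω ≤ ENNReal.ofReal u ∧ ENNReal.ofReal u < b ω}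
      = ENNReal.ofReal ⁻¹' Ico (a ω) (b ω) := fun _ _ => rfl
  have hmeas : ∀ s : Set ℝ≥0∞, MeasurableSet s → MeasurableSet (ENNReal.ofReal ⁻¹' s) :=
    fun s hs => ENNReal.measurable_ofReal hs
  simp only [discInt, hS]
  rw [← integral_add (hf.indicator (hmeas _ measurableSet_Ico))
    (hf.indicator (hmeas _ measurableSet_Ico)), ← Ico_union_Ico_eq_Ico hab hbd, preimage_union,
    indicator_union_of_disjoint ((Ico_disjoint_Ico_same).preimage _)]

variable [MeasurableSpace Ω]

lemma integrableOn_exp_mul_of_abs_le (hβ : 0 < β) (hf : Measurable (Function.uncurry f))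
    (hC : ∀ u ω, |f u ω| ≤ C) (ω : Ω) :
    IntegrableOn (fun u => Real.exp (-β * (u - c ω)) * f u ω) (Ioi 0) := by
  refine ((integrableOn_exp_neg_mul_sub hβ 0 (c ω)).mul_const C).mono'
    ((Real.measurable_exp.comp (by fun_prop)).mul hf.of_uncurry_right).aestronglyMeasurable
    (ae_of_all _ fun u => ?_)
  rw [norm_mul, Real.norm_eq_abs, Real.abs_exp]
  exact mul_le_mul_of_nonneg_left (hC u ω) (Real.exp_nonneg _)

lemma discInt_le_div (hβ : 0 < β) (hf : Measurable (Function.uncurry f))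
    (h0 : ∀ u ω, 0 ≤ f u ω) (hC : ∀ u ω, f u ω ≤ C)
    (hca : ∀ u : ℝ, 0 < u → a ω ≤ ENNReal.ofReal u → c ω ≤ u) :
    discInt β f a b c ω ≤ C / β := by
  have habs : ∀ u ω, |f u ω| ≤ C := fun u ω => abs_le.2 ⟨by linarith [h0 u ω, hC u ω], hC u ω⟩
  set g : ℝ → ℝ := (Ici (c ω)).indicator fun u => C * Real.exp (-β * (u - c ω))
  have hg : Integrable g := by
    rw [integrable_indicator_iff measurableSet_Ici, IntegrableOn,
      Measure.restrict_congr_set Ioi_ae_eq_Ici.symm]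
    exact (integrableOn_exp_neg_mul_sub hβ _ _).const_mul C
  have hg0 : 0 ≤ g :=
    indicator_nonneg fun _ _ => mul_nonneg ((h0 0 ω).trans (hC 0 ω)) (Real.exp_nonneg _)
  calc discInt β f a b c ω ≤ ∫ u in Ioi 0, g u := by
        refine setIntegral_mono_on ((integrableOn_exp_mul_of_abs_le hβ hf habs ω).indicator
            (ENNReal.measurable_ofReal measurableSet_Ico)) hg.integrableOn measurableSet_Ioi
          fun u hu => ?_
        by_cases hS : u ∈ {u : ℝ | a ω ≤ ENNReal.ofReal u ∧ ENNReal.ofReal u < b ω}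
        · rw [indicator_of_mem hS, show g u = C * Real.exp (-β * (u - c ω)) from
            indicator_of_mem (mem_Ici.2 (hca u hu hS.1)) _, mul_comm C]
          exact mul_le_mul_of_nonneg_left (hC u ω) (Real.exp_nonneg _)
        · rw [indicator_of_notMem hS]
          exact hg0 u
    _ ≤ ∫ u, g u := setIntegral_le_integral hg (ae_of_all _ hg0)
    _ = C / β := by
        rw [integral_indicator measurableSet_Ici, integral_Ici_eq_integral_Ioi,
          integral_const_mul, integral_exp_neg_mul_sub hβ]
        ring

lemma stronglyMeasurable_discInt (hf : Measurable (Function.uncurry f))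
    (ha : Measurable a) (hb : Measurable b) (hc : Measurable c) :
    StronglyMeasurable (discInt β f a b c) := by
  have hu : Measurable fun p : Ω × ℝ => ENNReal.ofReal p.2 :=
    ENNReal.measurable_ofReal.comp measurable_snd
  have hS : MeasurableSet {p : Ω × ℝ | a p.1 ≤ ENNReal.ofReal p.2 ∧ ENNReal.ofReal p.2 < b p.1} :=
    (measurableSet_le (ha.comp measurable_fst) hu).inter
      (measurableSet_lt hu (hb.comp measurable_fst))
  have hg : Measurable fun p : Ω × ℝ => Real.exp (-β * (p.2 - c p.1)) * f p.2 p.1 :=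
    (Real.measurable_exp.comp (by fun_prop)).mul (hf.comp measurable_swap)
  exact (hg.indicator hS).stronglyMeasurable.integral_prod_right'

end DiscountedIntegral

section CondExp

variable {Ω : Type*} {𝒢 m0 : MeasurableSpace Ω} {μ : Measure Ω} {f g h k φ : Ω → ℝ} {c : ℝ}

lemma condExp_add_mul_le_mul_condExp_iff (hf : Integrable f μ) (hg : Integrable g μ)
    (hh : Integrable h μ) (hk : k =ᵐ[μ] g + h) :
    μ[fun ω => f ω + c * h ω|𝒢] ≤ᵐ[μ] (fun ω => c * μ[k|𝒢] ω) ↔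
      μ[f|𝒢] ≤ᵐ[μ] fun ω => c * μ[g|𝒢] ω := by
  have hl : μ[fun ω => f ω + c * h ω|𝒢] =ᵐ[μ] μ[f|𝒢] + c • μ[h|𝒢] :=
    (condExp_add hf (hh.const_mul c) 𝒢).trans (EventuallyEq.rfl.add (condExp_smul c h 𝒢))
  have hr : μ[k|𝒢] =ᵐ[μ] μ[g|𝒢] + μ[h|𝒢] := (condExp_congr_ae hk).trans (condExp_add hg hh 𝒢)
  constructor <;> intro H <;> filter_upwards [H, hl, hr] with ω H hl hr <;>
    simp only [hl, hr, Pi.add_apply, Pi.smul_apply, smul_eq_mul, mul_add] at H ⊢ <;> linarith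

lemma condExp_mul_le_const_mul_iff (hφ : StronglyMeasurable[𝒢] φ) (hφ0 : 0 ≤ φ)
    (hf : Integrable f μ) (hg : Integrable g μ) (hφf : Integrable (φ * f) μ)
    (hφg : Integrable (φ * g) μ) :
    μ[φ * f|𝒢] ≤ᵐ[μ] (fun ω => c * μ[φ * g|𝒢] ω) ↔
      ∀ᵐ ω ∂μ, φ ω ≠ 0 → μ[f|𝒢] ω ≤ c * μ[g|𝒢] ω := by
  have hf' := condExp_mul_of_stronglyMeasurable_left hφ hφf hf
  have hg' := condExp_mul_of_stronglyMeasurable_left hφ hφg hg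
  constructor
  · intro H
    filter_upwards [H, hf', hg'] with ω H hf' hg' hφω
    rw [hf', hg', Pi.mul_apply, Pi.mul_apply, mul_left_comm] at H
    exact le_of_mul_le_mul_left H ((hφ0 ω).lt_of_ne' hφω)
  · intro H
    filter_upwards [H, hf', hg'] with ω H hf' hg'
    rw [hf', hg', Pi.mul_apply, Pi.mul_apply, mul_left_comm]
    rcases eq_or_ne (φ ω) 0 with h0 | h0
    · simp [h0]
    · exact mul_le_mul_of_nonneg_left (H h0) (hφ0 ω)

end CondExp

section StoppingTime

variable {Ω ι : Type*} {m0 : MeasurableSpace Ω}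

lemma MeasureTheory.IsStoppingTime.piecewise_coe [Preorder ι] {𝒢 : Filtration ι m0}
    {τ π : Ω → ι} {s : Set Ω} [DecidablePred (· ∈ s)]
    (hτ : IsStoppingTime 𝒢 fun ω => (τ ω : WithTop ι))
    (hπ : IsStoppingTime 𝒢 fun ω => (π ω : WithTop ι))
    (hsτ : MeasurableSet[hτ.measurableSpace] s) (hsπ : MeasurableSet[hπ.measurableSpace] s) :
    IsStoppingTime 𝒢 fun ω => (s.piecewise τ π ω : WithTop ι) := by
  intro i
  have : {ω | (s.piecewise τ π ω : WithTop ι) ≤ i}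
      = s ∩ {ω | (τ ω : WithTop ι) ≤ i} ∪ sᶜ ∩ {ω | (π ω : WithTop ι) ≤ i} := by
    ext ω
    by_cases hω : ω ∈ s <;> simp [hω]
  rw [this]
  exact (hsτ.2 i).union (hsπ.compl.2 i)

variable [LinearOrder ι] [TopologicalSpace ι] [OrderTopology ι] [SecondCountableTopology ι]
  [MeasurableSpace ι] [BorelSpace ι] [Nonempty ι] {𝒢 : Filtration ι m0} {τ π : Ω → ι}

lemma MeasureTheory.IsStoppingTime.measurable_coe
    (hτ : IsStoppingTime 𝒢 fun ω => (τ ω : WithTop ι)) :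
    Measurable[hτ.measurableSpace] τ :=
  hτ.measurable.untopA

lemma MeasureTheory.IsStoppingTime.measurableSet_le_const_inter_le
    (hτ : IsStoppingTime 𝒢 fun ω => (τ ω : WithTop ι))
    (hπ : IsStoppingTime 𝒢 fun ω => (π ω : WithTop ι)) (i : ι) :
    MeasurableSet[hτ.measurableSpace] ({ω | τ ω ≤ i} ∩ {ω | τ ω ≤ π ω}) ∧
      MeasurableSet[hπ.measurableSpace] ({ω | τ ω ≤ i} ∩ {ω | τ ω ≤ π ω}) := by
  have hτi : MeasurableSet[hτ.measurableSpace] {ω | τ ω ≤ i} :=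
    hτ.measurable_coe measurableSet_Iic
  have hπ' := hτ.measurableSet_inter_le hπ _ hτi
  simp only [WithTop.coe_le_coe] at hπ'
  exact ⟨hτi.inter (by simpa using hτ.measurableSet_le_stopping_time hπ),
    (hτ.min hπ).measurableSpace_mono hπ (fun ω => min_le_right _ _) _ hπ'⟩

end StoppingTime

section Retirement

variable {Ω : Type*} {𝒢 m0 : MeasurableSpace Ω} {P : Measure Ω}
  {β m C : ℝ} {f q X : ℝ → Ω → ℝ} {a b η : Ω → ℝ≥0∞} {c : Ω → ℝ}

noncomputable def retirementPayoff (β m : ℝ) (q X : ℝ → Ω → ℝ) (η τ : Ω → ℝ≥0∞) : Ω → ℝ :=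
  fun ω => discInt β (fun u ω' => q u ω' * X u ω') η τ (fun ω' => (η ω').toReal) ω
    + β * m * discInt β q τ (fun _ => ∞) (fun ω' => (η ω').toReal) ω

lemma integrable_discInt_of_le [IsFiniteMeasure P] (hβ : 0 < β)
    (hf : Measurable (Function.uncurry f)) (h0 : ∀ u ω, 0 ≤ f u ω) (hC : ∀ u ω, f u ω ≤ C)
    (ha : Measurable a) (hb : Measurable b) (hc : Measurable c)
    (hca : ∀ᵐ ω ∂P, ∀ u : ℝ, 0 < u → a ω ≤ ENNReal.ofReal u → c ω ≤ u) :
    Integrable (discInt β f a b c) P := by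
  refine Integrable.mono' (integrable_const (C / β))
    (stronglyMeasurable_discInt hf ha hb hc).aestronglyMeasurable ?_
  filter_upwards [hca] with ω hω
  rw [Real.norm_of_nonneg (discInt_nonneg h0 ω)]
  exact discInt_le_div hβ hf h0 hC hω

lemma integrable_discInt_zero [IsFiniteMeasure P] (hβ : 0 < β)
    (hf : Measurable (Function.uncurry f)) (h0 : ∀ u ω, 0 ≤ f u ω) (hC : ∀ u ω, f u ω ≤ C)
    (ha : Measurable a) (hb : Measurable b) :
    Integrable (discInt β f a b fun _ => 0) P :=
  integrable_discInt_of_le hβ hf h0 hC ha hb measurable_const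
    (ae_of_all _ fun _ _ hu _ => hu.le)

lemma integrable_discInt_toReal [IsFiniteMeasure P] (hβ : 0 < β)
    (hf : Measurable (Function.uncurry f)) (h0 : ∀ u ω, 0 ≤ f u ω) (hC : ∀ u ω, f u ω ≤ C)
    (hη : Measurable η) (ha : Measurable a) (hb : Measurable b) (hηa : ∀ᵐ ω ∂P, η ω ≤ a ω) :
    Integrable (discInt β f a b fun ω => (η ω).toReal) P :=
  integrable_discInt_of_le hβ hf h0 hC ha hb hη.ennreal_toReal
    (hηa.mono fun _ hω _ hu hau => ENNReal.toReal_le_of_le_ofReal hu.le (hω.trans hau))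

lemma integrable_discInt_mul (hq : Measurable (Function.uncurry q)) (hq0 : ∀ u ω, 0 ≤ q u ω)
    (hqC : ∀ u ω, q u ω ≤ C) (hX : Measurable (Function.uncurry X)) (hX0 : ∀ u ω, 0 ≤ X u ω)
    (hXint : ∫⁻ ω, (∫⁻ t in Ioi (0:ℝ), ENNReal.ofReal (Real.exp (-β * t) * X t ω)) ∂P ≠ ∞)
    (ha : Measurable a) (hb : Measurable b) :
    Integrable (discInt β (fun u ω => q u ω * X u ω) a b fun _ => 0) P := by
  refine ⟨(stronglyMeasurable_discInt (hq.mul hX) ha hb measurable_const).aestronglyMeasurable,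
    ?_⟩
  have hpt : ∀ ω, ‖discInt β (fun u ω => q u ω * X u ω) a b (fun _ => 0) ω‖ₑ
      ≤ ENNReal.ofReal C * ∫⁻ t in Ioi (0:ℝ), ENNReal.ofReal (Real.exp (-β * t) * X t ω) := by
    intro ω
    rw [← lintegral_const_mul' _ _ ENNReal.ofReal_ne_top]
    refine (enorm_integral_le_lintegral_enorm _).trans (lintegral_mono fun u => ?_)
    refine (enorm_indicator_le_enorm_self _ u).trans ?_
    rw [Real.enorm_of_nonneg (by have := hq0 u ω; have := hX0 u ω; positivity),
      ← ENNReal.ofReal_mul ((hq0 0 ω).trans (hqC 0 ω)), sub_zero]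
    refine ENNReal.ofReal_le_ofReal ?_
    calc Real.exp (-β * u) * (q u ω * X u ω) = q u ω * (Real.exp (-β * u) * X u ω) := by ring
      _ ≤ C * (Real.exp (-β * u) * X u ω) :=
        mul_le_mul_of_nonneg_right (hqC u ω) (mul_nonneg (Real.exp_nonneg _) (hX0 u ω))
  calc ∫⁻ ω, ‖discInt β (fun u ω => q u ω * X u ω) a b (fun _ => 0) ω‖ₑ ∂P
      ≤ ∫⁻ ω, ENNReal.ofReal C *
          (∫⁻ t in Ioi (0:ℝ), ENNReal.ofReal (Real.exp (-β * t) * X t ω)) ∂P :=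
        lintegral_mono hpt
    _ < ∞ := by
      rw [lintegral_const_mul' _ _ ENNReal.ofReal_ne_top]
      exact ENNReal.mul_lt_top ENNReal.ofReal_lt_top hXint.lt_top

lemma integrable_indicator_exp_mul {A : Set Ω} {g : Ω → ℝ} {t : ℝ≥0∞} (hβ : 0 ≤ β)
    (hη : Measurable η) (hA : MeasurableSet A) (hAt : ∀ ω ∈ A, η ω ≤ t) (ht : t ≠ ∞)
    (hg : Integrable g P) :
    Integrable (A.indicator (fun ω => Real.exp (β * (η ω).toReal)) * g) P := by
  refine hg.bdd_mul (c := Real.exp (β * t.toReal))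
    ((Real.measurable_exp.comp (hη.ennreal_toReal.const_mul β)).indicator hA).aestronglyMeasurable
    (ae_of_all _ fun ω => ?_)
  by_cases h : ω ∈ A
  · rw [indicator_of_mem h, Real.norm_of_nonneg (Real.exp_pos _).le]
    exact Real.exp_le_exp.2 (mul_le_mul_of_nonneg_left (ENNReal.toReal_mono ht (hAt ω h)) hβ)
  · simp [indicator_of_notMem h, (Real.exp_pos _).le]

lemma condExp_retirementPayoff_le_iff [IsFiniteMeasure P] {σ : Ω → ℝ≥0∞} (hβ : 0 < β)
    (hq : Measurable (Function.uncurry q)) (hq0 : ∀ u ω, 0 ≤ q u ω) (hqC : ∀ u ω, q u ω ≤ C)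
    (hη : Measurable η) (hσ : Measurable σ) (hησ : ∀ᵐ ω ∂P, η ω ≤ σ ω)
    (hint : Integrable (discInt β (fun u ω => q u ω * X u ω) η σ fun ω => (η ω).toReal) P) :
    P[retirementPayoff β m q X η σ|𝒢] ≤ᵐ[P]
        (fun ω => β * m * P[discInt β q η (fun _ => ∞) (fun ω => (η ω).toReal)|𝒢] ω) ↔
      P[discInt β (fun u ω => q u ω * X u ω) η σ (fun ω => (η ω).toReal)|𝒢] ≤ᵐ[P]
        fun ω => β * m * P[discInt β q η σ (fun ω => (η ω).toReal)|𝒢] ω := by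
  have habs : ∀ u ω, |q u ω| ≤ C := fun u ω => abs_le.2 ⟨by linarith [hq0 u ω, hqC u ω], hqC u ω⟩
  exact condExp_add_mul_le_mul_condExp_iff hint
    (integrable_discInt_toReal hβ hq hq0 hqC hη hη hσ (ae_of_all _ fun _ => le_rfl))
    (integrable_discInt_toReal hβ hq hq0 hqC hη hσ measurable_const hησ)
    (hησ.mono fun ω h =>
      (discInt_add_discInt (integrableOn_exp_mul_of_abs_le hβ hq habs ω) h le_top).symm)

/-- Moving the discount origin from `η` to `0` multiplies by the `𝒢`-measurable factor `e^{βη}`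
on `A`, which pulls out of the conditional expectations and cancels there. -/
lemma condExp_discInt_le_iff_of_indicator [IsFiniteMeasure P] {A : Set Ω} {b b' : Ω → ℝ≥0∞}
    (hβ : 0 < β) (hq : Measurable (Function.uncurry q)) (hq0 : ∀ u ω, 0 ≤ q u ω)
    (hqC : ∀ u ω, q u ω ≤ C) (hX : Measurable (Function.uncurry X)) (hX0 : ∀ u ω, 0 ≤ X u ω)
    (hXint : ∫⁻ ω, (∫⁻ t in Ioi (0:ℝ), ENNReal.ofReal (Real.exp (-β * t) * X t ω)) ∂P ≠ ∞)
    (h𝒢 : 𝒢 ≤ m0) (hη : Measurable[𝒢] η) (hA : MeasurableSet[𝒢] A) (hb : Measurable b)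
    (hb' : Measurable b') (hbA : ∀ ω ∈ A, b ω = b' ω) (hbAc : ∀ ω ∉ A, b ω ≤ η ω)
    (hint : Integrable (discInt β (fun u ω => q u ω * X u ω) η b fun ω => (η ω).toReal) P) :
    P[discInt β (fun u ω => q u ω * X u ω) η b (fun ω => (η ω).toReal)|𝒢] ≤ᵐ[P]
        (fun ω => β * m * P[discInt β q η b (fun ω => (η ω).toReal)|𝒢] ω) ↔
      ∀ᵐ ω ∂P, ω ∈ A →
        P[discInt β (fun u ω => q u ω * X u ω) η b' (fun _ => 0)|𝒢] ω ≤
          β * m * P[discInt β q η b' (fun _ => 0)|𝒢] ω := by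
  have hη' : Measurable η := hη.mono h𝒢 le_rfl
  have hφ : StronglyMeasurable[𝒢] (A.indicator fun ω => Real.exp (β * (η ω).toReal)) :=
    ((Real.measurable_exp.comp (hη.ennreal_toReal.const_mul β)).indicator hA).stronglyMeasurable
  have hφ0 : 0 ≤ A.indicator fun ω => Real.exp (β * (η ω).toReal) :=
    indicator_nonneg fun _ _ => (Real.exp_pos _).le
  have hq' : Integrable (discInt β q η b fun ω => (η ω).toReal) P :=
    integrable_discInt_toReal hβ hq hq0 hqC hη' hη' hb (ae_of_all _ fun _ => le_rfl)
  have heq := fun f : ℝ → Ω → ℝ => discInt_eq_indicator_mul (β := β) (f := f)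
    (c := fun ω => (η ω).toReal) hbA hbAc
  rw [heq] at hint hq' ⊢
  rw [heq]
  refine (condExp_mul_le_const_mul_iff hφ hφ0
    (integrable_discInt_mul hq hq0 hqC hX hX0 hXint hη' hb')
    (integrable_discInt_zero hβ hq hq0 hqC hη' hb') hint hq').trans
    (eventually_congr (ae_of_all _ fun ω => ?_))
  by_cases h : ω ∈ A <;> simp [h, (Real.exp_pos _).ne']

variable {F : Filtration ℝ≥0∞ m0} {𝓜 : Ω → Set ℝ≥0∞}

lemma condExp_discInt_le_of_forall_retirementPayoff_le [IsFiniteMeasure P] (hβ : 0 < β)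
    (hq : Measurable (Function.uncurry q)) (hq0 : ∀ u ω, 0 ≤ q u ω) (hqC : ∀ u ω, q u ω ≤ C)
    (hX : Measurable (Function.uncurry X)) (hX0 : ∀ u ω, 0 ≤ X u ω)
    (hXint : ∫⁻ ω, (∫⁻ t in Ioi (0:ℝ), ENNReal.ofReal (Real.exp (-β * t) * X t ω)) ∂P ≠ ∞)
    (hη : IsStoppingTime F fun ω => (η ω : WithTop ℝ≥0∞)) (hηfin : ∀ᵐ ω ∂P, η ω < ∞)
    (hη𝓜 : ∀ᵐ ω ∂P, η ω ∈ 𝓜 ω)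
    (hopt : ∀ σ : Ω → ℝ≥0∞, IsStoppingTime F (fun ω => (σ ω : WithTop ℝ≥0∞)) →
      (∀ᵐ ω ∂P, σ ω ∈ 𝓜 ω ∧ η ω ≤ σ ω) →
      P[retirementPayoff β m q X η σ|hη.measurableSpace] ≤ᵐ[P] fun ω =>
        β * m * P[discInt β q η (fun _ => ∞) (fun ω => (η ω).toReal)|hη.measurableSpace] ω)
    {τ : Ω → ℝ≥0∞} (hτ : IsStoppingTime F fun ω => (τ ω : WithTop ℝ≥0∞))
    (hτ𝓜 : ∀ᵐ ω ∂P, τ ω ∈ 𝓜 ω ∧ η ω ≤ τ ω) :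
    P[discInt β (fun u ω => q u ω * X u ω) η τ (fun _ => 0)|hη.measurableSpace] ≤ᵐ[P]
      fun ω => β * m * P[discInt β q η τ (fun _ => 0)|hη.measurableSpace] ω := by
  classical
  suffices H : ∀ n : ℕ, ∀ᵐ ω ∂P, ω ∈ {ω | η ω ≤ n} ∩ {ω | η ω ≤ τ ω} →
      P[discInt β (fun u ω => q u ω * X u ω) η τ (fun _ => 0)|hη.measurableSpace] ω ≤
        β * m * P[discInt β q η τ (fun _ => 0)|hη.measurableSpace] ω by
    filter_upwards [ae_all_iff.2 H, hτ𝓜, hηfin] with ω hω hτω hηω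
    obtain ⟨n, hn⟩ := ENNReal.exists_nat_gt hηω.ne
    exact hω n ⟨hn.le, hτω.2⟩
  intro n
  set A := {ω | η ω ≤ n} ∩ {ω | η ω ≤ τ ω}
  obtain ⟨hAη, hAτ⟩ := hη.measurableSet_le_const_inter_le hτ n
  set σ := A.piecewise τ η
  have hσ : IsStoppingTime F fun ω => (σ ω : WithTop ℝ≥0∞) := hτ.piecewise_coe hη hAτ hAη
  have hσA : ∀ ω ∈ A, σ ω = τ ω := fun ω h => piecewise_eq_of_mem _ _ _ h
  have hσAc : ∀ ω ∉ A, σ ω ≤ η ω := fun ω h => (piecewise_eq_of_notMem _ _ _ h).le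
  have hησ : ∀ ω, η ω ≤ σ ω := fun ω => by
    by_cases h : ω ∈ A
    · exact (hσA ω h).symm ▸ h.2
    · exact (piecewise_eq_of_notMem _ _ _ h).ge
  have hσ𝓜 : ∀ᵐ ω ∂P, σ ω ∈ 𝓜 ω ∧ η ω ≤ σ ω := by
    filter_upwards [hτ𝓜, hη𝓜] with ω hτω hηω
    refine ⟨?_, hησ ω⟩
    by_cases h : ω ∈ A <;> simp [σ, h, hτω.1, hηω]
  have hηm : Measurable η := hη.measurable_coe.mono hη.measurableSpace_le le_rfl
  have hτm : Measurable τ := hτ.measurable_coe.mono hτ.measurableSpace_le le_rfl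
  have hσm : Measurable σ := hσ.measurable_coe.mono hσ.measurableSpace_le le_rfl
  have hint : Integrable (discInt β (fun u ω => q u ω * X u ω) η σ fun ω => (η ω).toReal) P := by
    rw [discInt_eq_indicator_mul hσA hσAc]
    exact integrable_indicator_exp_mul hβ.le hηm (hη.measurableSpace_le _ hAη)
      (fun ω h => h.1) (ENNReal.natCast_ne_top n)
      (integrable_discInt_mul hq hq0 hqC hX hX0 hXint hηm hτm)
  have hgood := (condExp_retirementPayoff_le_iff hβ hq hq0 hqC hηm hσm
    (ae_of_all _ hησ) hint).1 (hopt σ hσ hσ𝓜)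
  exact (condExp_discInt_le_iff_of_indicator hβ hq hq0 hqC hX hX0 hXint hη.measurableSpace_le
    hη.measurable_coe hAη hσm hτm hσA hσAc hint).1 hgood

lemma condExp_retirementPayoff_le_of_forall_condExp_discInt_le [IsFiniteMeasure P]
    (hβ : 0 < β) (hm : 0 ≤ m) (hq : Measurable (Function.uncurry q)) (hq0 : ∀ u ω, 0 ≤ q u ω)
    (hqC : ∀ u ω, q u ω ≤ C) (hX : Measurable (Function.uncurry X)) (hX0 : ∀ u ω, 0 ≤ X u ω)
    (hXint : ∫⁻ ω, (∫⁻ t in Ioi (0:ℝ), ENNReal.ofReal (Real.exp (-β * t) * X t ω)) ∂P ≠ ∞)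
    (h𝓜top : ∀ ω, ∞ ∈ 𝓜 ω)
    (hη : IsStoppingTime F fun ω => (η ω : WithTop ℝ≥0∞)) (hηfin : ∀ᵐ ω ∂P, η ω < ∞)
    (hrate : ∀ σ : Ω → ℝ≥0∞, IsStoppingTime F (fun ω => (σ ω : WithTop ℝ≥0∞)) →
      (∀ᵐ ω ∂P, σ ω ∈ 𝓜 ω ∧ η ω < σ ω) →
      P[discInt β (fun u ω => q u ω * X u ω) η σ (fun _ => 0)|hη.measurableSpace] ≤ᵐ[P]
        fun ω => β * m * P[discInt β q η σ (fun _ => 0)|hη.measurableSpace] ω)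
    {τ : Ω → ℝ≥0∞} (hτ : IsStoppingTime F fun ω => (τ ω : WithTop ℝ≥0∞))
    (hτ𝓜 : ∀ᵐ ω ∂P, τ ω ∈ 𝓜 ω ∧ η ω ≤ τ ω) :
    P[retirementPayoff β m q X η τ|hη.measurableSpace] ≤ᵐ[P] fun ω =>
      β * m * P[discInt β q η (fun _ => ∞) (fun ω => (η ω).toReal)|hη.measurableSpace] ω := by
  classical
  have hηm : Measurable η := hη.measurable_coe.mono hη.measurableSpace_le le_rfl
  have hτm : Measurable τ := hτ.measurable_coe.mono hτ.measurableSpace_le le_rfl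
  by_cases hint : Integrable (discInt β (fun u ω => q u ω * X u ω) η τ fun ω => (η ω).toReal) P
  swap
  · have hpay : ¬ Integrable (retirementPayoff β m q X η τ) P := fun h => hint <| by
      refine (h.sub ((integrable_discInt_toReal (b := fun _ => ∞) hβ hq hq0 hqC hηm hτm
        measurable_const (hτ𝓜.mono fun _ h => h.2)).const_mul (β * m))).congr
        (ae_of_all _ fun ω => ?_)
      simp [retirementPayoff]
    -- Mathlib's conditional expectation of a non-integrable function is `0`.
    rw [condExp_of_not_integrable hpay]
    filter_upwards [condExp_nonneg (ae_of_all _ (discInt_nonneg hq0))] with ω hω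
    exact mul_nonneg (mul_nonneg hβ.le hm) hω
  rw [condExp_retirementPayoff_le_iff hβ hq hq0 hqC hηm hτm (hτ𝓜.mono fun _ h => h.2) hint]
  set B := {ω | η ω < τ ω}
  have hB : B = {ω | (τ ω : WithTop ℝ≥0∞) ≤ η ω}ᶜ := by ext; simp [B]
  have hBη : MeasurableSet[hη.measurableSpace] B :=
    hB ▸ (hτ.measurableSet_stopping_time_le hη).compl
  have hBτ : MeasurableSet[hτ.measurableSpace] B :=
    hB ▸ (hτ.measurableSet_le_stopping_time hη).compl
  have hBtop : MeasurableSet[(isStoppingTime_const F ∞).measurableSpace] B :=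
    hτ.measurableSpace_mono _ (fun ω => WithTop.coe_le_coe.2 le_top) _ hBτ
  set σ := B.piecewise τ fun _ => ∞
  have hσ : IsStoppingTime F fun ω => (σ ω : WithTop ℝ≥0∞) :=
    hτ.piecewise_coe (π := fun _ => ∞) (isStoppingTime_const F ∞) hBτ hBtop
  have hσ𝓜 : ∀ᵐ ω ∂P, σ ω ∈ 𝓜 ω ∧ η ω < σ ω := by
    filter_upwards [hτ𝓜, hηfin] with ω hτω hηω
    by_cases h : ω ∈ B
    · simpa [σ, h] using ⟨hτω.1, h⟩
    · simpa [σ, h] using ⟨h𝓜top ω, hηω⟩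
  exact (condExp_discInt_le_iff_of_indicator hβ hq hq0 hqC hX hX0 hXint hη.measurableSpace_le
    hη.measurable_coe hBη hτm (hσ.measurable_coe.mono hσ.measurableSpace_le le_rfl)
    (fun ω h => (piecewise_eq_of_mem _ _ _ h).symm) (fun ω h => not_lt.1 h) hint).2
    ((hrate σ hσ hσ𝓜).mono fun ω h _ => h)

end Retirement

theorem gittins_index_maximal_reward_rate_general
    {Ω : Type*} {m0 : MeasurableSpace Ω} {P : MeasureTheory.Measure Ω}
    [IsProbabilityMeasure P]
    (β : ℝ) (hβ : 0 < β)
    (F : Filtration ℝ≥0∞ m0)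
    (𝓜 : Ω → Set ℝ≥0∞)
    (h𝓜top : ∀ ω, ∞ ∈ 𝓜 ω)
    -- the reward rate process
    (X : ℝ → Ω → ℝ)
    (hXnonneg : ∀ t ω, 0 ≤ X t ω)
    (hXmeas : Measurable (Function.uncurry X))
    (hXint : ∫⁻ ω, (∫⁻ t in Ioi (0:ℝ), ENNReal.ofReal (Real.exp (-β * t) * X t ω)) ∂P ≠ ∞)
    -- the discount weight process
    (q : ℝ → Ω → ℝ)
    (hqmeas : Measurable (Function.uncurry q))
    (hqnonneg : ∀ t ω, 0 ≤ q t ω)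
    (hqbdd : ∃ C : ℝ, ∀ t ω, q t ω ≤ C)
    -- the finite feasible stopping time `η` and retirement level `m`
    (η : Ω → ℝ≥0∞) (hη : IsStoppingTime F (fun ω => (η ω : WithTop ℝ≥0∞)))
    (hηfin : ∀ᵐ ω ∂P, η ω < ∞) (hη𝓜 : ∀ᵐ ω ∂P, η ω ∈ 𝓜 ω)
    (m : ℝ) (hm : 0 ≤ m)
    -- `V` is the value of the restricted retirement problem `V_q(η, m)`
    (V : Ω → ℝ)
    (hVdom : ∀ (τ : Ω → ℝ≥0∞), IsStoppingTime F (fun ω => (τ ω : WithTop ℝ≥0∞)) →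
      (∀ᵐ ω ∂P, τ ω ∈ 𝓜 ω ∧ η ω ≤ τ ω) →
      P[(fun ω => discInt β (fun u ω' => q u ω' * X u ω') η τ (fun ω' => (η ω').toReal) ω
          + β * m * discInt β q τ (fun _ => ∞) (fun ω' => (η ω').toReal) ω)
        | hη.measurableSpace] ≤ᵐ[P] V)
    (hVleast : ∀ U : Ω → ℝ, StronglyMeasurable[hη.measurableSpace] U →
      (∀ (τ : Ω → ℝ≥0∞), IsStoppingTime F (fun ω => (τ ω : WithTop ℝ≥0∞)) →
        (∀ᵐ ω ∂P, τ ω ∈ 𝓜 ω ∧ η ω ≤ τ ω) →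
        P[(fun ω => discInt β (fun u ω' => q u ω' * X u ω') η τ (fun ω' => (η ω').toReal) ω
            + β * m * discInt β q τ (fun _ => ∞) (fun ω' => (η ω').toReal) ω)
          | hη.measurableSpace] ≤ᵐ[P] U) →
      V ≤ᵐ[P] U) :
    -- the retirement value collapses iff `βm` dominates every conditional reward rate
    (V ≤ᵐ[P]
        fun ω => β * m *
          (P[(fun ω' => discInt β q η (fun _ => ∞) (fun ω' => (η ω').toReal) ω')
            | hη.measurableSpace]) ω) ↔
      (∀ (τ : Ω → ℝ≥0∞), IsStoppingTime F (fun ω => (τ ω : WithTop ℝ≥0∞)) →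
        (∀ᵐ ω ∂P, τ ω ∈ 𝓜 ω ∧ η ω < τ ω) →
        (P[(fun ω => discInt β (fun u ω' => q u ω' * X u ω') η τ (fun _ => 0) ω)
            | hη.measurableSpace]) ≤ᵐ[P]
          fun ω => β * m *
            (P[(fun ω' => discInt β q η τ (fun _ => 0) ω') | hη.measurableSpace]) ω) := by
  obtain ⟨C, hqC⟩ := hqbdd
  constructor
  · intro hV τ hτ hτ𝓜
    exact condExp_discInt_le_of_forall_retirementPayoff_le hβ hqmeas hqnonneg hqC hXmeas
      hXnonneg hXint hη hηfin hη𝓜 (fun σ hσ hσ𝓜 => (hVdom σ hσ hσ𝓜).trans hV) hτ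
      (hτ𝓜.mono fun _ h => ⟨h.1, h.2.le⟩)
  · intro hrate
    exact hVleast _ (stronglyMeasurable_condExp.const_mul _) fun τ hτ hτ𝓜 =>
      condExp_retirementPayoff_le_of_forall_condExp_discInt_le hβ hm hqmeas hqnonneg hqC hXmeas
        hXnonneg hXint h𝓜top hη hηfin hrate hτ hτ𝓜

/-- Lemma 3.2(d) of the paper: the Gittins index is the maximal reward
rate. For a finite feasible stopping time `η ∈ 𝓜` and `m ≥ 0`, the value `V_q(η,m)` of
the restricted retirement problem collapses to the retirement reward
`βm E[∫_η^∞ e^{-β(u-η)} q_u du | F_η]` iff `βm` dominates the conditional reward rate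
`E[∫_η^τ e^{-βu} q_u X_u du | F_η] / E[∫_η^τ e^{-βu} q_u du | F_η]` for every feasible
stopping time `τ > η`. -/
theorem gittins_index_maximal_reward_rate
    {Ω : Type*} {m0 : MeasurableSpace Ω} {P : MeasureTheory.Measure Ω}
    [IsProbabilityMeasure P]
    (β : ℝ) (hβ : 0 < β)
    (F : Filtration ℝ≥0∞ m0)
    -- quasi-left-continuity of the filtration
    (hFqlc : ∀ (τn : ℕ → Ω → ℝ≥0∞) (τ : Ω → ℝ≥0∞) (hτn : ∀ n, IsStoppingTime F (fun ω => (τn n ω : WithTop ℝ≥0∞)))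
      (hτ : IsStoppingTime F (fun ω => (τ ω : WithTop ℝ≥0∞))), (∀ ω, Monotone fun n => τn n ω) →
      (∀ ω, Tendsto (fun n => τn n ω) atTop (𝓝 (τ ω))) →
      (⨆ n, (hτn n).measurableSpace) = hτ.measurableSpace)
    (𝓜 : Ω → Set ℝ≥0∞)
    (h𝓜closed : ∀ ω, IsClosed (𝓜 ω)) (h𝓜zero : ∀ ω, 0 ∈ 𝓜 ω) (h𝓜top : ∀ ω, ∞ ∈ 𝓜 ω)
    -- the reward rate process
    (X : ℝ → Ω → ℝ)
    (hXnonneg : ∀ t ω, 0 ≤ X t ω)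
    (hXmeas : Measurable (Function.uncurry X))
    (hXadapted : ∀ t : ℝ, 0 ≤ t → StronglyMeasurable[F (ENNReal.ofReal t)] (X t))
    (hXint : ∫⁻ ω, (∫⁻ t in Ioi (0:ℝ), ENNReal.ofReal (Real.exp (-β * t) * X t ω)) ∂P ≠ ∞)
    -- the discount weight process
    (q : ℝ → Ω → ℝ)
    (hqmeas : Measurable (Function.uncurry q))
    (hqadapted : ∀ t : ℝ, 0 ≤ t → StronglyMeasurable[F (ENNReal.ofReal t)] (q t))
    (hqrc : ∀ ω, ∀ t : ℝ, 0 ≤ t → ContinuousWithinAt (fun u => q u ω) (Ici t) t)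
    (hqanti : ∀ ω, AntitoneOn (fun u => q u ω) (Ici (0:ℝ)))
    (hqnonneg : ∀ t ω, 0 ≤ q t ω)
    (hqbdd : ∃ C : ℝ, ∀ t ω, q t ω ≤ C)
    -- the finite feasible stopping time `η` and retirement level `m`
    (η : Ω → ℝ≥0∞) (hη : IsStoppingTime F (fun ω => (η ω : WithTop ℝ≥0∞)))
    (hηfin : ∀ᵐ ω ∂P, η ω < ∞) (hη𝓜 : ∀ᵐ ω ∂P, η ω ∈ 𝓜 ω)
    (m : ℝ) (hm : 0 ≤ m)
    -- `V` is the value of the restricted retirement problem `V_q(η, m)`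
    (V : Ω → ℝ)
    (hVmeas : StronglyMeasurable[hη.measurableSpace] V)
    (hVdom : ∀ (τ : Ω → ℝ≥0∞), IsStoppingTime F (fun ω => (τ ω : WithTop ℝ≥0∞)) →
      (∀ᵐ ω ∂P, τ ω ∈ 𝓜 ω ∧ η ω ≤ τ ω) →
      P[(fun ω => discInt β (fun u ω' => q u ω' * X u ω') η τ (fun ω' => (η ω').toReal) ω
          + β * m * discInt β q τ (fun _ => ∞) (fun ω' => (η ω').toReal) ω)
        | hη.measurableSpace] ≤ᵐ[P] V)
    (hVleast : ∀ U : Ω → ℝ, StronglyMeasurable[hη.measurableSpace] U →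
      (∀ (τ : Ω → ℝ≥0∞), IsStoppingTime F (fun ω => (τ ω : WithTop ℝ≥0∞)) →
        (∀ᵐ ω ∂P, τ ω ∈ 𝓜 ω ∧ η ω ≤ τ ω) →
        P[(fun ω => discInt β (fun u ω' => q u ω' * X u ω') η τ (fun ω' => (η ω').toReal) ω
            + β * m * discInt β q τ (fun _ => ∞) (fun ω' => (η ω').toReal) ω)
          | hη.measurableSpace] ≤ᵐ[P] U) →
      V ≤ᵐ[P] U) :
    -- the retirement value collapses iff `βm` dominates every conditional reward rate
    (V ≤ᵐ[P]
        fun ω => β * m *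
          (P[(fun ω' => discInt β q η (fun _ => ∞) (fun ω' => (η ω').toReal) ω')
            | hη.measurableSpace]) ω) ↔
      (∀ (τ : Ω → ℝ≥0∞), IsStoppingTime F (fun ω => (τ ω : WithTop ℝ≥0∞)) →
        (∀ᵐ ω ∂P, τ ω ∈ 𝓜 ω ∧ η ω < τ ω) →
        (P[(fun ω => discInt β (fun u ω' => q u ω' * X u ω') η τ (fun _ => 0) ω)
            | hη.measurableSpace]) ≤ᵐ[P]
          fun ω => β * m *
            (P[(fun ω' => discInt β q η τ (fun _ => 0) ω') | hη.measurableSpace]) ω) :=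
  gittins_index_maximal_reward_rate_general β hβ F 𝓜 h𝓜top X hXnonneg hXmeas hXint q hqmeas hqnonneg
    hqbdd η hη hηfin hη𝓜 m hm V hVdom hVleast
end

section
/- Lemma (single-arm reward bound under an arbitrary policy). Let T = (T(t))_{t≥0} be one coordinate of an admissible allocation policy: T is nondecreasing and continuous with T(0) = 0 and T(t) ≤ t for all t, let ζ(u) = inf{ t : T(t) > u } be its right-continuous inverse, and set q_u = exp(−β(ζ(u) − u)), a right-continuous, nonincreasing, bounded process with values in (0,1] that decreases on the right only at times in 𝓜. Let M̲(t) and M̲^q(t) be the pathwise lower envelopes of the Gittins index processes, i.e., the pathwise inverses M̲(t) = sup{ m ≥ 0 : σ_0(m) > t } and M̲^q(t) = sup{ m ≥ 0 : σ^q_0(m) > t } of the optimal restricted stopping times of the retirement problems with discount weights q ≡ 1 and q respectively. Assume, as established by the single-arm theory: (i) M̲^q(t) ≤ M̲(t) pathwise, and (ii) the representation E[∫_0^∞ e^{-βu} q_u X_u du] = β E[∫_0^∞ e^{-βu} q_u M̲^q(u) du]. Then E[∫_0^∞ e^{-βt} X_{T(t)} dT(t)] ≤ β E[∫_0^∞ e^{-βt}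 M̲(T(t)) dT(t)]. -/
open Set Filter Topology MeasureTheory
open scoped ENNReal NNReal

/-!
Substituting `u = T(t)` turns `dT(t)` into Lebesgue measure on the range of `T`: the
right-continuous inverse `ζ` pushes Lebesgue measure on that range forward to `dT`, and
`T ∘ ζ = id` there. Under this substitution `e^{-βt} X_{T(t)} dT(t)` becomes
`e^{-βζ(u)} X_u du = e^{-βu} q_u X_u du` exactly, while `e^{-βt} M̲(T(t)) dT(t)` dominates
`e^{-βu} q_u M̲(u) du` because `ζ(T(t)) ≥ t`. Between the two, the index representation and
`M̲^q ≤ M̲` do the work.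
-/

theorem ENNReal.ofReal_mul_le_ofReal_mul {a b c : ℝ} (ha : 0 ≤ a) (hab : a ≤ b) :
    ENNReal.ofReal (a * c) ≤ ENNReal.ofReal (b * c) := by
  rcases le_total 0 c with hc | hc
  · exact ENNReal.ofReal_le_ofReal (mul_le_mul_of_nonneg_right hab hc)
  · rw [ENNReal.ofReal_of_nonpos (mul_nonpos_of_nonneg_of_nonpos ha hc)]
    exact bot_le

namespace StieltjesFunction

variable (S : StieltjesFunction ℝ)

/-- For continuous `S` this is the interior of its range, the set on which `rightContInv`
inverts `S`. -/
def openRange : Set ℝ := {u | ∃ s t, S s < u ∧ u < S t}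

noncomputable def rightContInv (u : ℝ) : ℝ := sInf {t | u < S t}

/-- The paper's `ζ`. -/
noncomputable def passageTime (u : ℝ) : ℝ≥0∞ :=
  ⨅ t ∈ {t : ℝ | 0 ≤ t ∧ u < S t}, ENNReal.ofReal t

/-- The paper's weight `q`. -/
noncomputable def discount (β u : ℝ) : ℝ :=
  if S.passageTime u = ∞ then 0 else Real.exp (-β * ((S.passageTime u).toReal - u))

variable {S}

theorem measurableSet_openRange : MeasurableSet S.openRange := by
  refine Set.OrdConnected.measurableSet ⟨fun x hx y hy u hu => ?_⟩
  obtain ⟨s, -, hs, -⟩ := hx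
  obtain ⟨-, t, -, ht⟩ := hy
  exact ⟨s, t, hs.trans_le hu.1, hu.2.trans_lt ht⟩

theorem nonempty_setOf_lt_apply {u : ℝ} (hu : u ∈ S.openRange) : {t | u < S t}.Nonempty :=
  let ⟨_, t, _, ht⟩ := hu
  ⟨t, ht⟩

theorem bddBelow_setOf_lt_apply {u : ℝ} (hu : u ∈ S.openRange) : BddBelow {t | u < S t} := by
  obtain ⟨s, -, hs, -⟩ := hu
  exact ⟨s, fun x hx => S.mono.reflect_lt (hs.trans hx) |>.le⟩

theorem monotoneOn_rightContInv : MonotoneOn S.rightContInv S.openRange :=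
  fun _ hu _ hv huv =>
    csInf_le_csInf (bddBelow_setOf_lt_apply hu) (nonempty_setOf_lt_apply hv)
      fun _ ht => huv.trans_lt ht

theorem aemeasurable_rightContInv :
    AEMeasurable S.rightContInv (volume.restrict S.openRange) :=
  aemeasurable_restrict_of_monotoneOn measurableSet_openRange monotoneOn_rightContInv

theorem rightContInv_lt_iff (hS : Continuous S) {u t : ℝ} (hu : u ∈ S.openRange) :
    S.rightContInv u < t ↔ u < S t := by
  constructor
  · intro h
    obtain ⟨x, hx, hxt⟩ := exists_lt_of_csInf_lt (nonempty_setOf_lt_apply hu) h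
    exact hx.trans_le (S.mono hxt.le)
  · intro h
    have hleft : ∀ᶠ x in 𝓝[<] t, u < S x :=
      ((hS.tendsto t).eventually (lt_mem_nhds h)).filter_mono nhdsWithin_le_nhds
    obtain ⟨x, hx, hxt⟩ := (hleft.and self_mem_nhdsWithin).exists
    exact (csInf_le (bddBelow_setOf_lt_apply hu) hx).trans_lt hxt

theorem apply_rightContInv (hS : Continuous S) {u : ℝ} (hu : u ∈ S.openRange) :
    S (S.rightContInv u) = u := by
  refine le_antisymm (not_lt.1 fun h => lt_irrefl _ ((rightContInv_lt_iff hS hu).2 h)) ?_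
  have hright : Tendsto S (𝓝[>] S.rightContInv u) (𝓝 (S (S.rightContInv u))) :=
    (hS.tendsto _).mono_left nhdsWithin_le_nhds
  refine ge_of_tendsto hright ?_
  filter_upwards [self_mem_nhdsWithin] with x hx using ((rightContInv_lt_iff hS hu).1 hx).le

theorem map_rightContInv (hS : Continuous S) :
    (volume.restrict S.openRange).map S.rightContInv = S.measure := by
  refine (Measure.ext_of_Ico' S.measure _ (fun a b _ => by simp [measure_Ico])
    fun a b _ => ?_).symm
  have hpre : S.rightContInv ⁻¹' Ico a b ∩ S.openRange = Ico (S a) (S b) ∩ S.openRange := by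
    ext u
    refine ⟨fun ⟨⟨ha, hb⟩, hu⟩ => ⟨⟨?_, ?_⟩, hu⟩,
      fun ⟨⟨ha, hb⟩, hu⟩ => ⟨⟨?_, ?_⟩, hu⟩⟩
    · exact not_lt.1 fun h => ha.not_gt ((rightContInv_lt_iff hS hu).2 h)
    · exact (rightContInv_lt_iff hS hu).1 hb
    · exact not_lt.1 fun h => ha.not_gt ((rightContInv_lt_iff hS hu).1 h)
    · exact (rightContInv_lt_iff hS hu).2 hb
  have hIoo : Ioo (S a) (S b) ⊆ Ico (S a) (S b) ∩ S.openRange :=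
    fun u hu => ⟨Ioo_subset_Ico_self hu, a, b, hu.1, hu.2⟩
  rw [Measure.map_apply_of_aemeasurable aemeasurable_rightContInv measurableSet_Ico,
    Measure.restrict_apply' measurableSet_openRange, hpre, measure_Ico,
    hS.continuousWithinAt.leftLim_eq, hS.continuousWithinAt.leftLim_eq]
  refine le_antisymm ?_ ?_
  · rw [← Real.volume_Ioo]
    exact measure_mono hIoo
  · rw [← Real.volume_Ico]
    exact measure_mono inter_subset_left

theorem map_measure (hS : Continuous S) : S.measure.map S = volume.restrict S.openRange := by
  calc S.measure.map S = ((volume.restrict S.openRange).map S.rightContInv).map S := by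
        rw [map_rightContInv hS]
    _ = (volume.restrict S.openRange).map (S ∘ S.rightContInv) :=
        AEMeasurable.map_map_of_aemeasurable hS.measurable.aemeasurable
          aemeasurable_rightContInv
    _ = (volume.restrict S.openRange).map id :=
        Measure.map_congr (ae_restrict_of_forall_mem measurableSet_openRange
          fun _ hu => apply_rightContInv hS hu)
    _ = volume.restrict S.openRange := Measure.map_id

theorem measure_restrict_Ici {a : ℝ} (h : ∀ t ≤ a, S t = S a) :
    S.measure.restrict (Ici a) = S.measure := by
  have hbot : Tendsto S atBot (𝓝 (S a)) :=
    tendsto_const_nhds.congr' (eventually_atBot.2 ⟨a, fun t ht => (h t ht).symm⟩)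
  refine Measure.restrict_eq_self_of_ae_mem (ae_iff.2 (measure_mono_null (t := Iic a) ?_ ?_))
  · exact fun x hx => (by simpa using hx : x < a).le
  · rw [S.measure_Iic hbot, sub_self, ENNReal.ofReal_zero]

theorem openRange_subset_Ioi (h0 : ∀ t ≤ 0, S t = 0) : S.openRange ⊆ Ioi 0 := by
  rintro u ⟨s, -, hs, -⟩
  exact ((h0 _ (min_le_right s 0)).symm.le.trans (S.mono (min_le_left s 0))).trans_lt hs

theorem rightContInv_nonneg (hS : Continuous S) (h0 : ∀ t ≤ 0, S t = 0) {u : ℝ}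
    (hu : u ∈ S.openRange) : 0 ≤ S.rightContInv u := by
  refine not_lt.1 fun h => ?_
  have := (rightContInv_lt_iff hS hu).1 h
  rw [h0 0 le_rfl] at this
  exact this.not_gt (openRange_subset_Ioi h0 hu)

theorem passageTime_eq_top_iff {u : ℝ} :
    S.passageTime u = ∞ ↔ ∀ t, 0 ≤ t → S t ≤ u := by
  simp [passageTime]

theorem ofReal_le_passageTime_apply (t : ℝ) : ENNReal.ofReal t ≤ S.passageTime (S t) :=
  le_iInf₂ fun _ hs => ENNReal.ofReal_le_ofReal (S.mono.reflect_lt hs.2).le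

theorem passageTime_eq_ofReal (hS : Continuous S) {u : ℝ} (hu : u ∈ S.openRange) :
    S.passageTime u = ENNReal.ofReal (S.rightContInv u) := by
  refine le_antisymm ?_
    (le_iInf₂ fun t ht => ENNReal.ofReal_le_ofReal ((rightContInv_lt_iff hS hu).2 ht.2).le)
  refine ENNReal.le_of_forall_pos_le_add fun ε hε _ => ?_
  have hmem : max (S.rightContInv u) 0 + ε ∈ {t : ℝ | 0 ≤ t ∧ u < S t} :=
    ⟨by positivity,
      (rightContInv_lt_iff hS hu).1 (by linarith [le_max_left (S.rightContInv u) 0])⟩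
  calc S.passageTime u ≤ ENNReal.ofReal (max (S.rightContInv u) 0 + ε) := biInf_le _ hmem
    _ = ENNReal.ofReal (S.rightContInv u) + ε := by
        rw [ENNReal.ofReal_add (le_max_right _ _) ε.coe_nonneg, ENNReal.ofReal_coe_nnreal,
          ENNReal.ofReal_max, ENNReal.ofReal_zero, max_eq_left zero_le]

theorem discount_nonneg (β u : ℝ) : 0 ≤ S.discount β u := by
  unfold discount
  split_ifs <;> positivity

theorem discount_eq_zero (h0 : ∀ t ≤ 0, S t = 0) {β u : ℝ} (hu0 : 0 < u)
    (hu : u ∉ S.openRange) : S.discount β u = 0 := by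
  refine if_pos (passageTime_eq_top_iff.2 fun t _ => not_lt.1 fun ht => hu ⟨0, t, ?_, ht⟩)
  rwa [h0 0 le_rfl]

theorem exp_mul_discount_of_mem (hS : Continuous S) (h0 : ∀ t ≤ 0, S t = 0) (β : ℝ) {u : ℝ}
    (hu : u ∈ S.openRange) :
    Real.exp (-β * u) * S.discount β u = Real.exp (-β * S.rightContInv u) := by
  rw [discount, passageTime_eq_ofReal hS hu, if_neg ENNReal.ofReal_ne_top,
    ENNReal.toReal_ofReal (rightContInv_nonneg hS h0 hu), ← Real.exp_add]
  ring_nf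

theorem exp_mul_discount_apply_le {β : ℝ} (hβ : 0 ≤ β) (t : ℝ) :
    Real.exp (-β * S t) * S.discount β (S t) ≤ Real.exp (-β * t) := by
  unfold discount
  split_ifs with htop
  · rw [mul_zero]
    positivity
  · have ht := (ENNReal.ofReal_le_iff_le_toReal htop).1 (ofReal_le_passageTime_apply t)
    rw [← Real.exp_add, Real.exp_le_exp]
    nlinarith

theorem setLIntegral_Ioi_eq_setLIntegral_openRange (h0 : ∀ t ≤ 0, S t = 0) (β : ℝ)
    (f : ℝ → ℝ) :
    ∫⁻ u in Ioi 0, ENNReal.ofReal (Real.exp (-β * u) * S.discount β u * f u)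
      = ∫⁻ u in S.openRange, ENNReal.ofReal (Real.exp (-β * u) * S.discount β u * f u) := by
  set F := fun u => ENNReal.ofReal (Real.exp (-β * u) * S.discount β u * f u)
  calc ∫⁻ u in Ioi 0, F u = ∫⁻ u in Ioi 0, S.openRange.indicator F u := by
        refine setLIntegral_congr_fun _root_.measurableSet_Ioi fun u hu => ?_
        by_cases h : u ∈ S.openRange
        · rw [indicator_of_mem h]
        · rw [indicator_of_notMem h]
          simp only [F, discount_eq_zero h0 hu h, mul_zero, zero_mul, ENNReal.ofReal_zero]
    _ = ∫⁻ u in S.openRange, F u := by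
        rw [lintegral_indicator measurableSet_openRange,
          Measure.restrict_restrict measurableSet_openRange,
          inter_eq_left.2 (openRange_subset_Ioi h0)]

theorem setLIntegral_Ici_exp_mul_comp (hS : Continuous S) (h0 : ∀ t ≤ 0, S t = 0) (β : ℝ)
    {f : ℝ → ℝ} (hf : Measurable f) :
    ∫⁻ t in Ici 0, ENNReal.ofReal (Real.exp (-β * t) * f (S t)) ∂S.measure
      = ∫⁻ u in Ioi 0, ENNReal.ofReal (Real.exp (-β * u) * S.discount β u * f u) := by
  rw [measure_restrict_Ici fun t ht => (h0 t ht).trans (h0 0 le_rfl).symm,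
    ← map_rightContInv hS, lintegral_map' (by fun_prop) aemeasurable_rightContInv,
    setLIntegral_Ioi_eq_setLIntegral_openRange h0]
  refine setLIntegral_congr_fun measurableSet_openRange fun u hu => ?_
  rw [apply_rightContInv hS hu, exp_mul_discount_of_mem hS h0 β hu]

theorem setLIntegral_Ioi_exp_mul_discount_le (hS : Continuous S) (h0 : ∀ t ≤ 0, S t = 0)
    {β : ℝ} (hβ : 0 ≤ β) (f : ℝ → ℝ) :
    ∫⁻ u in Ioi 0, ENNReal.ofReal (Real.exp (-β * u) * S.discount β u * f u)
      ≤ ∫⁻ t in Ici 0, ENNReal.ofReal (Real.exp (-β * t) * f (S t)) ∂S.measure := by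
  rw [setLIntegral_Ioi_eq_setLIntegral_openRange h0, ← map_measure hS,
    measure_restrict_Ici fun t ht => (h0 t ht).trans (h0 0 le_rfl).symm]
  refine (lintegral_map_le _ _).trans (lintegral_mono fun t => ?_)
  exact ENNReal.ofReal_mul_le_ofReal_mul
    (mul_nonneg (Real.exp_pos _).le (discount_nonneg _ _)) (exp_mul_discount_apply_le hβ t)

end StieltjesFunction

theorem single_arm_reward_bound_general
    {Ω : Type*} {m0 : MeasurableSpace Ω} (P : MeasureTheory.Measure Ω)
    (β : ℝ) (hβ : 0 < β)
    -- the nonnegative reward rate process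
    (X : ℝ → Ω → ℝ)
    (hXmeas : Measurable (Function.uncurry X))
    -- one coordinate of an admissible allocation policy
    (T : ℝ → Ω → ℝ)
    (hTcont : ∀ ω, Continuous fun t => T t ω)
    (hT0 : ∀ ω, ∀ t : ℝ, t ≤ 0 → T t ω = 0)
    -- its right-continuous inverse `ζ`
    (ζ : ℝ → Ω → ℝ≥0∞)
    (hζ : ∀ (u : ℝ) (ω : Ω), ζ u ω = ⨅ t ∈ {t : ℝ | 0 ≤ t ∧ u < T t ω}, ENNReal.ofReal t)
    -- the induced discount weight `q_u = exp(-β(ζ(u) - u))`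
    (q : ℝ → Ω → ℝ)
    (hq : ∀ (u : ℝ) (ω : Ω),
      q u ω = if ζ u ω = ∞ then 0 else Real.exp (-β * ((ζ u ω).toReal - u)))
    -- the lower envelopes of the Gittins index processes, i.e. the pathwise inverses of
    -- the optimal restricted stopping times `σ_0(m)` and `σ^q_0(m)`
    (Mlow Mlowq : ℝ → Ω → ℝ)
    -- (i) the comparison of the two lower envelopes
    (hcompare : ∀ (t : ℝ) (ω : Ω), 0 ≤ t → Mlowq t ω ≤ Mlow t ω)
    -- (ii) the index representation for the weight `q`
    (hrep : ∫⁻ ω, (∫⁻ u in Ioi (0:ℝ),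
          ENNReal.ofReal (Real.exp (-β * u) * q u ω * X u ω)) ∂P
        = ENNReal.ofReal β * ∫⁻ ω, (∫⁻ u in Ioi (0:ℝ),
            ENNReal.ofReal (Real.exp (-β * u) * q u ω * Mlowq u ω)) ∂P)
    -- the pathwise Lebesgue–Stieltjes structure of `T`
    (ST : Ω → StieltjesFunction ℝ)
    (hST : ∀ (ω : Ω) (t : ℝ), ST ω t = T t ω) :
    ∫⁻ ω, (∫⁻ t in Ici (0:ℝ),
        ENNReal.ofReal (Real.exp (-β * t) * X (T t ω) ω) ∂(ST ω).measure) ∂P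
      ≤ ENNReal.ofReal β * ∫⁻ ω, (∫⁻ t in Ici (0:ℝ),
          ENNReal.ofReal (Real.exp (-β * t) * Mlow (T t ω) ω) ∂(ST ω).measure) ∂P := by
  have hS : ∀ ω, Continuous (ST ω) := fun ω => by
    simpa only [← hST] using hTcont ω
  have h0 : ∀ ω, ∀ t ≤ 0, ST ω t = 0 := fun ω t ht => (hST ω t).trans (hT0 ω t ht)
  have hqS : ∀ u ω, q u ω = (ST ω).discount β u := fun u ω => by
    simp only [hq, hζ, StieltjesFunction.discount, StieltjesFunction.passageTime, hST]
  simp only [hqS] at hrep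
  simp only [← hST]
  calc ∫⁻ ω, (∫⁻ t in Ici 0,
        ENNReal.ofReal (Real.exp (-β * t) * X (ST ω t) ω) ∂(ST ω).measure) ∂P
      = ∫⁻ ω, (∫⁻ u in Ioi 0,
          ENNReal.ofReal (Real.exp (-β * u) * (ST ω).discount β u * X u ω)) ∂P :=
        lintegral_congr fun ω =>
          (ST ω).setLIntegral_Ici_exp_mul_comp (hS ω) (h0 ω) β hXmeas.of_uncurry_right
    _ = ENNReal.ofReal β * ∫⁻ ω, (∫⁻ u in Ioi 0,
          ENNReal.ofReal (Real.exp (-β * u) * (ST ω).discount β u * Mlowq u ω)) ∂P := hrep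
    _ ≤ ENNReal.ofReal β * ∫⁻ ω, (∫⁻ u in Ioi 0,
          ENNReal.ofReal (Real.exp (-β * u) * (ST ω).discount β u * Mlow u ω)) ∂P := by
        gcongr _ * ∫⁻ ω, ?_ ∂P with ω
        refine setLIntegral_mono' measurableSet_Ioi fun u hu => ENNReal.ofReal_le_ofReal ?_
        exact mul_le_mul_of_nonneg_left (hcompare u ω (le_of_lt hu))
          (mul_nonneg (Real.exp_pos _).le (StieltjesFunction.discount_nonneg _ _))
    _ ≤ ENNReal.ofReal β * ∫⁻ ω, (∫⁻ t in Ici 0,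
          ENNReal.ofReal (Real.exp (-β * t) * Mlow (ST ω t) ω) ∂(ST ω).measure) ∂P := by
        gcongr _ * ∫⁻ ω, ?_ ∂P with ω
        exact (ST ω).setLIntegral_Ioi_exp_mul_discount_le (hS ω) (h0 ω) hβ.le _

/-- Lemma 3.4/3.5 of the paper: single-arm reward bound under an
arbitrary policy. For one coordinate `T` of an admissible allocation, with
right-continuous inverse `ζ(u) = inf{t : T(t) > u}` and induced weight
`q_u = e^{-β(ζ(u)-u)}`, if `M̲^q ≤ M̲` pathwise and the index representation
`E[∫_0^∞ e^{-βu} q_u X_u du] = β E[∫_0^∞ e^{-βu} q_u M̲^q(u) du]` holds, then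
`E[∫_0^∞ e^{-βt} X_{T(t)} dT(t)] ≤ β E[∫_0^∞ e^{-βt} M̲(T(t)) dT(t)]`. -/
theorem single_arm_reward_bound
    {Ω : Type*} {m0 : MeasurableSpace Ω} (P : MeasureTheory.Measure Ω)
    [IsProbabilityMeasure P]
    (β : ℝ) (hβ : 0 < β)
    (𝓜 : Ω → Set ℝ≥0∞)
    (h𝓜closed : ∀ ω, IsClosed (𝓜 ω)) (h𝓜zero : ∀ ω, 0 ∈ 𝓜 ω) (h𝓜top : ∀ ω, ∞ ∈ 𝓜 ω)
    -- the nonnegative reward rate process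
    (X : ℝ → Ω → ℝ)
    (hXnonneg : ∀ t ω, 0 ≤ X t ω)
    (hXmeas : Measurable (Function.uncurry X))
    (hXint : ∫⁻ ω, (∫⁻ t in Ioi (0:ℝ), ENNReal.ofReal (Real.exp (-β * t) * X t ω)) ∂P ≠ ∞)
    -- one coordinate of an admissible allocation policy
    (T : ℝ → Ω → ℝ)
    (hTmono : ∀ ω, Monotone fun t => T t ω)
    (hTcont : ∀ ω, Continuous fun t => T t ω)
    (hT0 : ∀ ω, ∀ t : ℝ, t ≤ 0 → T t ω = 0)
    (hTle : ∀ ω, ∀ t : ℝ, 0 ≤ t → T t ω ≤ t)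
    -- its right-continuous inverse `ζ`
    (ζ : ℝ → Ω → ℝ≥0∞)
    (hζ : ∀ (u : ℝ) (ω : Ω), ζ u ω = ⨅ t ∈ {t : ℝ | 0 ≤ t ∧ u < T t ω}, ENNReal.ofReal t)
    -- the induced discount weight `q_u = exp(-β(ζ(u) - u))`
    (q : ℝ → Ω → ℝ)
    (hq : ∀ (u : ℝ) (ω : Ω),
      q u ω = if ζ u ω = ∞ then 0 else Real.exp (-β * ((ζ u ω).toReal - u)))
    (hq𝓜 : ∀ ω, ∀ t : ℝ, 0 ≤ t → ENNReal.ofReal t ∉ 𝓜 ω →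
      ∃ ε > (0:ℝ), ∀ u ∈ Ico t (t + ε), q u ω = q t ω)
    -- the lower envelopes of the Gittins index processes, i.e. the pathwise inverses of
    -- the optimal restricted stopping times `σ_0(m)` and `σ^q_0(m)`
    (σ σq : ℝ → Ω → ℝ≥0∞)
    (Mlow Mlowq : ℝ → Ω → ℝ)
    (hMlow : ∀ (t : ℝ) (ω : Ω), 0 ≤ t →
      Mlow t ω = sSup {m : ℝ | 0 ≤ m ∧ ENNReal.ofReal t < σ m ω})
    (hMlowq : ∀ (t : ℝ) (ω : Ω), 0 ≤ t →
      Mlowq t ω = sSup {m : ℝ | 0 ≤ m ∧ ENNReal.ofReal t < σq m ω})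
    -- (i) the comparison of the two lower envelopes
    (hcompare : ∀ (t : ℝ) (ω : Ω), 0 ≤ t → Mlowq t ω ≤ Mlow t ω)
    -- (ii) the index representation for the weight `q`
    (hrep : ∫⁻ ω, (∫⁻ u in Ioi (0:ℝ),
          ENNReal.ofReal (Real.exp (-β * u) * q u ω * X u ω)) ∂P
        = ENNReal.ofReal β * ∫⁻ ω, (∫⁻ u in Ioi (0:ℝ),
            ENNReal.ofReal (Real.exp (-β * u) * q u ω * Mlowq u ω)) ∂P)
    -- the pathwise Lebesgue–Stieltjes structure of `T`
    (ST : Ω → StieltjesFunction ℝ)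
    (hST : ∀ (ω : Ω) (t : ℝ), ST ω t = T t ω) :
    ∫⁻ ω, (∫⁻ t in Ici (0:ℝ),
        ENNReal.ofReal (Real.exp (-β * t) * X (T t ω) ω) ∂(ST ω).measure) ∂P
      ≤ ENNReal.ofReal β * ∫⁻ ω, (∫⁻ t in Ici (0:ℝ),
          ENNReal.ofReal (Real.exp (-β * t) * Mlow (T t ω) ω) ∂(ST ω).measure) ∂P :=
  single_arm_reward_bound_general (m0 := m0) P β hβ X hXmeas T hTcont hT0 ζ hζ q hq Mlow Mlowq
    hcompare hrep ST hST
end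

section
/- Let d ≥ 1 and for k = 1, …, d let M̲^k : [0,∞) → [0,∞) be nonincreasing and right-continuous, with generalized inverse h^k(u) = inf{ s ≥ 0 : M̲^k(s) ≤ u } (inf ∅ = ∞). Let T̂ = (T̂^1, …, T̂^d) be an index (follow-the-leader) allocation: each T̂^k : [0,∞) → [0,∞) is nondecreasing with T̂^k(0) = 0, Σ_{k=1}^d T̂^k(t) = t for all t ≥ 0, and T̂^k right-increases at a time t (meaning T̂^k(t') > T̂^k(t) for every t' > t) only when M̲^k(T̂^k(t)) = max_{1≤j≤d} M̲^j(T̂^j(t)). Fix u ≥ 0 and let t > 0 be a point at which each of the maps s ↦ M̲^k(T̂^k(s)), k = 1, …, d, is continuous. Then Σ_{k=1}^d min(T̂^k(t), h^k(u)) = min( t, Σ_{k=1}^d h^k(u) ). -/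
open Set Filter Topology MeasureTheory
open scoped ENNReal

/-- equation (4.4) of the paper, deterministic form.
Under a follow-the-leader allocation `T̂`, at any continuity point `t` of the composed
lower envelopes, `Σ_k min(T̂^k(t), h^k(u)) = min(t, Σ_k h^k(u))`, where
`h^k(u) = inf{s ≥ 0 : M̲^k(s) ≤ u}` is the generalized inverse of the nonincreasing
right-continuous envelope `M̲^k`. -/
theorem follow_the_leader_exhausts_time
    (d : ℕ) (hd : 1 ≤ d)
    (Mlow : Fin d → ℝ → ℝ)
    (hManti : ∀ k, AntitoneOn (Mlow k) (Ici (0:ℝ)))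
    (hMrc : ∀ k, ∀ s : ℝ, 0 ≤ s → ContinuousWithinAt (Mlow k) (Ici s) s)
    (h : Fin d → ℝ → ℝ≥0∞)
    (hh : ∀ k (u : ℝ), h k u = ⨅ s ∈ {s : ℝ | 0 ≤ s ∧ Mlow k s ≤ u}, ENNReal.ofReal s)
    (That : Fin d → ℝ → ℝ)
    (hTmono : ∀ k, MonotoneOn (That k) (Ici (0:ℝ)))
    (hT0 : ∀ k, That k 0 = 0)
    (hTsum : ∀ t : ℝ, 0 ≤ t → ∑ k, That k t = t)
    (hFTL : ∀ k, ∀ t : ℝ, 0 ≤ t → (∀ t' : ℝ, t < t' → That k t < That k t') →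
      Mlow k (That k t) = ⨆ j, Mlow j (That j t))
    (u : ℝ) (hu : 0 ≤ u)
    (t : ℝ) (ht : 0 < t)
    (hcont : ∀ k, ContinuousAt (fun s => Mlow k (That k s)) t) :
    ∑ k, min (ENNReal.ofReal (That k t)) (h k u)
      = min (ENNReal.ofReal t) (∑ k, h k u) := by
  -- nonnegativity of That
  have hnn : ∀ k, ∀ s : ℝ, 0 ≤ s → 0 ≤ That k s := by
    intro k s hs
    have := hTmono k (self_mem_Ici) (mem_Ici.mpr hs) hs
    rwa [hT0 k] at this
  -- 1-Lipschitz property (from the sum constraint)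
  have hlip : ∀ k, ∀ a b : ℝ, 0 ≤ a → a ≤ b → That k b - That k a ≤ b - a := by
    intro k a b ha hab
    have hb : (0:ℝ) ≤ b := ha.trans hab
    have hsum : ∑ j, (That j b - That j a) = b - a := by
      rw [Finset.sum_sub_distrib, hTsum b hb, hTsum a ha]
    calc That k b - That k a
        ≤ ∑ j, (That j b - That j a) := by
          apply Finset.single_le_sum (f := fun j => That j b - That j a)
          · intro j _
            have := hTmono j (mem_Ici.mpr ha) (mem_Ici.mpr hb) hab
            linarith
          · exact Finset.mem_univ k
      _ = b - a := hsum
  -- ofReal of sum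
  have hofsum : ENNReal.ofReal t = ∑ k, ENNReal.ofReal (That k t) := by
    rw [← ENNReal.ofReal_sum_of_nonneg (fun k _ => hnn k t ht.le), hTsum t ht.le]
  by_cases hcase : ∀ k, ENNReal.ofReal (That k t) ≤ h k u
  · -- nobody has exhausted its threshold: LHS = t
    have hL : ∑ k, min (ENNReal.ofReal (That k t)) (h k u)
        = ENNReal.ofReal t := by
      rw [hofsum]
      exact Finset.sum_congr rfl fun k _ => min_eq_left (hcase k)
    have hR : ENNReal.ofReal t ≤ ∑ k, h k u := by
      rw [hofsum]
      exact Finset.sum_le_sum fun k _ => hcase k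
    rw [hL, min_eq_left hR]
  · push_neg at hcase
    obtain ⟨k0, hk0⟩ := hcase
    -- claim: every arm has exhausted its threshold
    have hall : ∀ j, h j u ≤ ENNReal.ofReal (That j t) := by
      by_contra hcon
      push_neg at hcon
      obtain ⟨j, hj⟩ := hcon
      -- arm j's index at time t is > u
      have hju : u < Mlow j (That j t) := by
        by_contra hle
        push_neg at hle
        have : h j u ≤ ENNReal.ofReal (That j t) := by
          rw [hh j u]
          exact iInf₂_le (That j t) ⟨hnn j t ht.le, hle⟩
        exact absurd this (not_le.mpr hj)
      -- extract a point v of the set for arm k0 below That k0 t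
      have hk0' : ∃ v : ℝ, (0 ≤ v ∧ Mlow k0 v ≤ u) ∧
          ENNReal.ofReal v < ENNReal.ofReal (That k0 t) := by
        rw [hh k0 u] at hk0
        simpa [iInf_lt_iff] using hk0
      obtain ⟨v, ⟨hv0, hvu⟩, hvlt⟩ := hk0'
      have hvlt' : v < That k0 t :=
        (ENNReal.ofReal_lt_ofReal_iff_of_nonneg hv0).mp hvlt
      -- the real threshold
      set S : Set ℝ := {s : ℝ | 0 ≤ s ∧ Mlow k0 s ≤ u} with hS
      have hSne : S.Nonempty := ⟨v, hv0, hvu⟩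
      have hSbdd : BddBelow S := ⟨0, fun s hs => hs.1⟩
      set r : ℝ := sInf S with hr
      have hr0 : 0 ≤ r := le_csInf hSne fun s hs => hs.1
      have hrv : r ≤ v := csInf_le hSbdd ⟨hv0, hvu⟩
      have hrt : r < That k0 t := lt_of_le_of_lt hrv hvlt'
      -- by right-continuity, the inf is attained: Mlow k0 r ≤ u
      have hrS : Mlow k0 r ≤ u := by
        have hsub : S ⊆ Ici r := fun s hs => csInf_le hSbdd hs
        have hcl : r ∈ closure S := csInf_mem_closure hSne hSbdd
        have hnb : (𝓝[S] r).NeBot := mem_closure_iff_nhdsWithin_neBot.mp hcl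
        have htd : Tendsto (Mlow k0) (𝓝[S] r) (𝓝 (Mlow k0 r)) :=
          (hMrc k0 r hr0).mono_left (nhdsWithin_mono r hsub)
        exact le_of_tendsto htd (eventually_nhdsWithin_of_forall fun s hs => hs.2)
      -- whenever That k0 s ≥ r, the index of k0 is ≤ u
      have hidx : ∀ s : ℝ, r ≤ That k0 s → Mlow k0 (That k0 s) ≤ u :=
        fun s hs => le_trans
          (hManti k0 (mem_Ici.mpr hr0) (mem_Ici.mpr (hr0.trans hs)) hs) hrS
      -- the last time arm k0's clock is ≤ r
      set C : Set ℝ := {s : ℝ | s ∈ Icc 0 t ∧ That k0 s ≤ r} with hC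
      have h0C : (0:ℝ) ∈ C := ⟨⟨le_refl 0, ht.le⟩, by rw [hT0 k0]; exact hr0⟩
      have hCne : C.Nonempty := ⟨0, h0C⟩
      have hCbdd : BddAbove C := ⟨t, fun s hs => hs.1.2⟩
      set c : ℝ := sSup C with hc
      have hc0 : 0 ≤ c := le_csSup hCbdd h0C
      have hct : c ≤ t := csSup_le hCne fun s hs => hs.1.2
      -- That k0 c ≤ r (by left-approximation and Lipschitz)
      have hgc_le : That k0 c ≤ r := by
        apply le_of_forall_pos_le_add
        intro ε hε
        obtain ⟨s, hsC, hslt⟩ := exists_lt_of_lt_csSup hCne (by linarith : c - ε < c)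
        have hsc : s ≤ c := le_csSup hCbdd hsC
        have := hlip k0 s c hsC.1.1 hsc
        have hsr : That k0 s ≤ r := hsC.2
        linarith
      have hclt : c < t := by
        rcases lt_or_eq_of_le hct with h' | h'
        · exact h'
        · exfalso; rw [h'] at hgc_le; linarith
      -- anything strictly after c has clock > r
      have hafter : ∀ s : ℝ, c < s → r < That k0 s := by
        intro s hcs
        rcases le_or_gt s t with hst | hst
        · by_contra hle
          push_neg at hle
          have : s ∈ C := ⟨⟨hc0.trans hcs.le, hst⟩, hle⟩
          exact absurd (le_csSup hCbdd this) (not_le.mpr hcs)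
        · have := hTmono k0 (mem_Ici.mpr ht.le) (mem_Ici.mpr (ht.le.trans hst.le)) hst.le
          linarith
      -- arm k0 right-increases at c
      have hinc : ∀ t' : ℝ, c < t' → That k0 c < That k0 t' := by
        intro t' hct'
        exact lt_of_le_of_lt hgc_le (hafter t' hct')
      -- That k0 c ≥ r (by right-approximation and Lipschitz)
      have hgc_ge : r ≤ That k0 c := by
        by_contra hlt
        push_neg at hlt
        set ε : ℝ := min (t - c) (r - That k0 c) with hε
        have hεpos : 0 < ε := lt_min (by linarith) (by linarith)
        have h1 : That k0 (c + ε) ≤ That k0 c + ε := by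
          have := hlip k0 c (c + ε) hc0 (by linarith)
          linarith
        have h2 : r < That k0 (c + ε) := hafter (c + ε) (by linarith)
        have h3 : ε ≤ r - That k0 c := min_le_right _ _
        linarith
      have hgc : That k0 c = r := le_antisymm hgc_le hgc_ge
      -- follow-the-leader at c
      have hftl := hFTL k0 c hc0 hinc
      -- LHS ≤ u
      have hL : Mlow k0 (That k0 c) ≤ u := by rw [hgc]; exact hrS
      -- RHS > u via arm j
      have hR : u < ⨆ i, Mlow i (That i c) := by
        have h1 : Mlow j (That j t) ≤ Mlow j (That j c) := by
          apply hManti j (mem_Ici.mpr (hnn j c hc0)) (mem_Ici.mpr (hnn j t ht.le))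
          exact hTmono j (mem_Ici.mpr hc0) (mem_Ici.mpr ht.le) hclt.le
        have h2 : Mlow j (That j c) ≤ ⨆ i, Mlow i (That i c) :=
          le_ciSup (f := fun i => Mlow i (That i c))
            (Set.Finite.bddAbove (Set.finite_range _)) j
        linarith
      rw [hftl] at hL
      linarith
    -- everyone has exhausted its threshold: LHS = Σ h
    have hL : ∑ k, min (ENNReal.ofReal (That k t)) (h k u) = ∑ k, h k u :=
      Finset.sum_congr rfl fun k _ => min_eq_right (hall k)
    have hR : ∑ k, h k u ≤ ENNReal.ofReal t := by
      rw [hofsum]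
      exact Finset.sum_le_sum fun k _ => hall k
    rw [hL, min_eq_right hR]
end

section
/- Theorem (pathwise optimality of index policies for deteriorating rewards). Let d ≥ 1, β > 0, and for k = 1, …, d let M̲^k : [0,∞) → [0,∞) be nonincreasing, right-continuous and bounded. Let T = (T^1, …, T^d) and T̂ = (T̂^1, …, T̂^d) be allocations: all components are nondecreasing, vanish at 0, and satisfy Σ_{k=1}^d T^k(t) = Σ_{k=1}^d T̂^k(t) = t for all t ≥ 0. Suppose T̂ is an index (follow-the-leader) allocation: T̂^k right-increases at a time t (i.e., T̂^k(t') > T̂^k(t) for every t' > t) only when M̲^k(T̂^k(t)) = max_{1≤j≤d} M̲^j(T̂^j(t)). Then Σ_{k=1}^d ∫_0^∞ e^{-βt} M̲^k(T^k(t)) dT^k(t) ≤ Σ_{k=1}^d ∫_0^∞ e^{-βt} M̲^k(T̂^k(t)) dT̂^k(t), where the integrals are Lebesgue–Stieltjes integrals (the components of any such allocation are 1-Lipschitz, hence continuous). -/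
open Set Filter Topology MeasureTheory
open scoped ENNReal

/-!
By a double layer-cake decomposition, the discounted reward of an allocation `T` equals
`∫_{m>0} ∫_{u>0} ∑_k μ_{T^k} {t ∈ [0, x_u) | m < M̲^k(T^k t)}` with `x_u = -log u / β`, so it
suffices to compare, for each level `m` and horizon `x`, the total time before `x` spent on arms
whose index exceeds `m`. For any allocation this is at most `min x σ_m`, where `σ_m` is the total
service all arms can receive before their indices drop to `m`. A follow-the-leader allocation
attains the bound: before time `σ_m` some arm still has index above `m`, and the leader only
serves arms of maximal index, except at times where its clock is flat to the right, which carry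
no `dT̂^k`-mass.
-/

namespace StieltjesFunction

variable (f : StieltjesFunction ℝ)

theorem measure_Icc_of_continuous (hf : Continuous f) (a b : ℝ) :
    f.measure (Icc a b) = ENNReal.ofReal (f b - f a) := by
  rw [measure_Icc, hf.continuousWithinAt.leftLim_eq]

theorem measure_Ico_of_continuous (hf : Continuous f) (a b : ℝ) :
    f.measure (Ico a b) = ENNReal.ofReal (f b - f a) := by
  rw [measure_Ico, hf.continuousWithinAt.leftLim_eq, hf.continuousWithinAt.leftLim_eq]

theorem measure_le_of_forall_sub_le (hf : Continuous f) {a : ℝ} {B : Set ℝ} {c : ℝ≥0∞}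
    (hB : B ⊆ Ici a) (hc : ∀ t ∈ B, ENNReal.ofReal (f t - f a) ≤ c) : f.measure B ≤ c := by
  have hclosed : IsClosed {t | ENNReal.ofReal (f t - f a) ≤ c} :=
    isClosed_le (ENNReal.continuous_ofReal.comp (by fun_prop)) continuous_const
  have hbounded (r : ℝ) : f.measure (B ∩ Iic r) ≤ c := by
    rcases (B ∩ Iic r).eq_empty_or_nonempty with hempty | hne
    · simp [hempty]
    have hbdd : BddAbove (B ∩ Iic r) := bddAbove_Iic.mono inter_subset_right
    calc f.measure (B ∩ Iic r) ≤ f.measure (Icc a (sSup (B ∩ Iic r))) :=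
          measure_mono fun t ht => ⟨hB ht.1, le_csSup hbdd ht⟩
      _ = ENNReal.ofReal (f (sSup (B ∩ Iic r)) - f a) := f.measure_Icc_of_continuous hf _ _
      _ ≤ c := hclosed.closure_subset_iff.2 (fun t ht => hc t ht.1) (csSup_mem_closure hne hbdd)
  have hmono : Monotone fun r : ℝ => B ∩ Iic r := fun _ _ h =>
    inter_subset_inter_right _ (Iic_subset_Iic.2 h)
  rw [← inter_univ B, ← iUnion_Iic, inter_iUnion, hmono.measure_iUnion]
  exact iSup_le hbounded

theorem measure_preimage_singleton_eq_zero (hf : Continuous f) (v : ℝ) :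
    f.measure (f ⁻¹' {v}) = 0 := by
  have hpiece (n : ℕ) : f.measure (f ⁻¹' {v} ∩ Icc (-n) n) = 0 := by
    set K := f ⁻¹' {v} ∩ Icc (-(n : ℝ)) n
    have hK : IsCompact K := isCompact_Icc.inter_left (isClosed_singleton.preimage hf)
    rcases K.eq_empty_or_nonempty with hempty | hne
    · rw [hempty, measure_empty]
    refine measure_mono_null (t := Icc (sInf K) (sSup K))
      (fun t ht => ⟨csInf_le hK.bddBelow ht, le_csSup hK.bddAbove ht⟩) ?_
    rw [f.measure_Icc_of_continuous hf, (hK.sSup_mem hne).1, (hK.sInf_mem hne).1, sub_self,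
      ENNReal.ofReal_zero]
  refine measure_mono_null (fun t ht => ?_) (measure_iUnion_null hpiece)
  obtain ⟨n, hn⟩ := exists_nat_ge |t|
  exact mem_iUnion.2 ⟨n, ht, abs_le.1 hn⟩

theorem measure_setOf_exists_gt_eq_eq_zero (hf : Continuous f) :
    f.measure {t | ∃ t' > t, f t' = f t} = 0 := by
  refine measure_mono_null (fun t ⟨t', htt', heq⟩ => ?_)
    (measure_iUnion_null fun q : ℚ => f.measure_preimage_singleton_eq_zero hf (f q))
  obtain ⟨q, htq, hqt'⟩ := exists_rat_btwn htt'
  exact mem_iUnion.2 ⟨q, le_antisymm (f.mono htq.le) ((f.mono hqt'.le).trans heq.le)⟩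

end StieltjesFunction

structure IsAllocation {ι : Type*} [Fintype ι] (F : ι → StieltjesFunction ℝ) : Prop where
  eq_zero_of_nonpos : ∀ k, ∀ t : ℝ, t ≤ 0 → F k t = 0
  sum_eq : ∀ t : ℝ, 0 ≤ t → ∑ k, F k t = t

/-- For antitone `M`, the set `{s ≥ 0 | m < M s}` is an interval starting at `0`, and
`timeAbove M m` is its length. -/
noncomputable def timeAbove (M : ℝ → ℝ) (m : ℝ) : ℝ≥0∞ :=
  ⨆ (s : ℝ) (_ : 0 ≤ s ∧ m < M s), ENNReal.ofReal s

def FollowsLeader {ι : Type*} (M : ι → ℝ → ℝ) (F : ι → StieltjesFunction ℝ) : Prop :=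
  ∀ k, ∀ t : ℝ, 0 ≤ t → (∀ t' : ℝ, t < t' → F k t < F k t') → M k (F k t) = ⨆ j, M j (F j t)

namespace IsAllocation

variable {ι : Type*} [Fintype ι] {F : ι → StieltjesFunction ℝ}

theorem nonneg (hF : IsAllocation F) (k : ι) (t : ℝ) : 0 ≤ F k t := by
  rcases le_total t 0 with ht | ht
  · exact (hF.eq_zero_of_nonpos k t ht).ge
  · exact (hF.eq_zero_of_nonpos k 0 le_rfl).symm.le.trans ((F k).mono ht)

theorem sub_le_sub (hF : IsAllocation F) (k : ι) {s t : ℝ} (hst : s ≤ t) :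
    F k t - F k s ≤ t - s := by
  wlog hs : 0 ≤ s generalizing s
  · have hs0 := hF.eq_zero_of_nonpos k s (le_of_not_ge hs)
    rcases le_total t 0 with ht | ht
    · rw [hF.eq_zero_of_nonpos k t ht, hs0]
      linarith
    · have h0 := this ht le_rfl
      rw [hF.eq_zero_of_nonpos k 0 le_rfl] at h0
      rw [hs0]
      linarith
  calc F k t - F k s ≤ ∑ j, (F j t - F j s) :=
        Finset.single_le_sum (f := fun j => F j t - F j s)
          (fun j _ => sub_nonneg.2 ((F j).mono hst)) (Finset.mem_univ k)
    _ = t - s := by rw [Finset.sum_sub_distrib, hF.sum_eq t (hs.trans hst), hF.sum_eq s hs]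

theorem lipschitzWith (hF : IsAllocation F) (k : ι) : LipschitzWith 1 (F k) := by
  refine LipschitzWith.of_le_add fun x y => ?_
  rw [Real.dist_eq]
  rcases le_total x y with hxy | hyx
  · linarith [(F k).mono hxy, abs_nonneg (x - y)]
  · linarith [hF.sub_le_sub k hyx, le_abs_self (x - y)]

theorem continuous (hF : IsAllocation F) (k : ι) : Continuous (F k) :=
  (hF.lipschitzWith k).continuous

theorem sum_measure_Ico (hF : IsAllocation F) (x : ℝ) :
    ∑ k, (F k).measure (Ico 0 x) = ENNReal.ofReal x := by
  rcases le_total x 0 with hx | hx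
  · simp [Ico_eq_empty_of_le hx, ENNReal.ofReal_of_nonpos hx]
  rw [Finset.sum_congr rfl fun k _ => (F k).measure_Ico_of_continuous (hF.continuous k) 0 x,
    ← ENNReal.ofReal_sum_of_nonneg fun k _ => ?_]
  · simp_rw [hF.eq_zero_of_nonpos _ 0 le_rfl, sub_zero, hF.sum_eq x hx]
  · rw [hF.eq_zero_of_nonpos k 0 le_rfl, sub_zero]
    exact hF.nonneg k x

theorem antitone_comp (hF : IsAllocation F) {M : ι → ℝ → ℝ} (hM : ∀ k, AntitoneOn (M k) (Ici 0))
    (k : ι) : Antitone fun t => M k (F k t) := fun _ _ hst =>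
  hM k (hF.nonneg k _) (hF.nonneg k _) ((F k).mono hst)

theorem sum_measure_le_min (hF : IsAllocation F) (M : ι → ℝ → ℝ) (m x : ℝ) :
    ∑ k, (F k).measure ({t | m < M k (F k t) ∧ t < x} ∩ Ici 0)
      ≤ min (ENNReal.ofReal x) (∑ k, timeAbove (M k) m) := by
  refine le_min ?_ (Finset.sum_le_sum fun k _ => ?_)
  · rw [← hF.sum_measure_Ico x]
    exact Finset.sum_le_sum fun k _ => measure_mono fun t ⟨⟨_, htx⟩, ht⟩ => ⟨ht, htx⟩
  · refine (F k).measure_le_of_forall_sub_le (hF.continuous k) inter_subset_right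
      fun t ⟨⟨hm, _⟩, _⟩ => ?_
    rw [hF.eq_zero_of_nonpos k 0 le_rfl, sub_zero]
    exact le_iSup₂ (f := fun s (_ : 0 ≤ s ∧ m < M k s) => ENNReal.ofReal s) _ ⟨hF.nonneg k t, hm⟩

theorem sum_timeAbove_le (hF : IsAllocation F) {M : ι → ℝ → ℝ}
    (hM : ∀ k, AntitoneOn (M k) (Ici 0)) {m t : ℝ} (ht : 0 ≤ t) (hle : ∀ k, M k (F k t) ≤ m) :
    ∑ k, timeAbove (M k) m ≤ ENNReal.ofReal t := by
  calc ∑ k, timeAbove (M k) m ≤ ∑ k, ENNReal.ofReal (F k t) :=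
        Finset.sum_le_sum fun k _ => iSup₂_le fun s ⟨hs, hms⟩ => ENNReal.ofReal_le_ofReal <|
          le_of_not_gt fun hlt => hms.not_ge ((hM k (hF.nonneg k t) hs hlt.le).trans (hle k))
    _ = ENNReal.ofReal t := by
      rw [← ENNReal.ofReal_sum_of_nonneg fun k _ => hF.nonneg k t, hF.sum_eq t ht]

end IsAllocation

namespace FollowsLeader

variable {ι : Type*} [Fintype ι] {M : ι → ℝ → ℝ} {F : ι → StieltjesFunction ℝ}

theorem ae_lt_of_exists_lt (hFTL : FollowsLeader M F) {k : ι}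
    (hc : Continuous (F k)) (m : ℝ) :
    ∀ᵐ t ∂(F k).measure, 0 ≤ t → (∃ j, m < M j (F j t)) → m < M k (F k t) := by
  rw [ae_iff]
  refine measure_mono_null (fun t ht => ?_) ((F k).measure_setOf_exists_gt_eq_eq_zero hc)
  obtain ⟨ht0, ⟨j, hj⟩, hk⟩ : 0 ≤ t ∧ (∃ j, m < M j (F j t)) ∧ ¬m < M k (F k t) := by
    simpa using ht
  by_contra hflat
  simp only [mem_ofPred_eq, not_exists, not_and] at hflat
  have hlead := hFTL k t ht0 fun t' htt' => ((F k).mono htt'.le).lt_of_ne (Ne.symm (hflat t' htt'))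
  exact hk (hj.trans_le ((le_ciSup (Set.finite_range _).bddAbove j).trans_eq hlead.symm))

theorem min_le_sum_measure (hF : IsAllocation F) (hM : ∀ k, AntitoneOn (M k) (Ici 0))
    (hFTL : FollowsLeader M F) (m x : ℝ) :
    min (ENNReal.ofReal x) (∑ k, timeAbove (M k) m)
      ≤ ∑ k, (F k).measure ({t | m < M k (F k t) ∧ t < x} ∩ Ici 0) := by
  refine le_of_forall_lt_imp_le_of_dense fun r hr => ?_
  have hr_top : r ≠ ⊤ := ne_top_of_lt hr
  have hsub : Ico 0 r.toReal ⊆ {t | (∃ j, m < M j (F j t)) ∧ t < x} ∩ Ici 0 := by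
    rintro t ⟨ht, htr⟩
    obtain ⟨htx, htσ⟩ := lt_min_iff.1 (((ENNReal.ofReal_lt_iff_lt_toReal ht hr_top).2 htr).trans hr)
    refine ⟨⟨?_, (ENNReal.ofReal_lt_ofReal_iff'.1 htx).1⟩, ht⟩
    by_contra! hle
    exact htσ.not_ge (hF.sum_timeAbove_le hM ht hle)
  calc r = ∑ k, (F k).measure (Ico 0 r.toReal) := by
        rw [hF.sum_measure_Ico, ENNReal.ofReal_toReal hr_top]
    _ ≤ ∑ k, (F k).measure ({t | (∃ j, m < M j (F j t)) ∧ t < x} ∩ Ici 0) :=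
        Finset.sum_le_sum fun k _ => measure_mono hsub
    _ ≤ _ := Finset.sum_le_sum fun k _ => measure_mono_ae <| by
        filter_upwards [hFTL.ae_lt_of_exists_lt (hF.continuous k) m] with t ht
        rintro ⟨⟨hj, htx⟩, ht0⟩
        exact ⟨⟨ht ht0 hj, htx⟩, ht0⟩

theorem sum_measure_le {T : ι → StieltjesFunction ℝ} (hT : IsAllocation T)
    (hF : IsAllocation F) (hM : ∀ k, AntitoneOn (M k) (Ici 0))
    (hFTL : FollowsLeader M F) (m x : ℝ) :
    ∑ k, (T k).measure ({t | m < M k (T k t) ∧ t < x} ∩ Ici 0)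
      ≤ ∑ k, (F k).measure ({t | m < M k (F k t) ∧ t < x} ∩ Ici 0) :=
  (hT.sum_measure_le_min M m x).trans (hFTL.min_le_sum_measure hF hM m x)

end FollowsLeader

theorem lintegral_ofReal_mul_eq {α : Type*} [MeasurableSpace α] (μ : Measure α) {g h : α → ℝ}
    (hg0 : ∀ a, 0 ≤ g a) (hg : Measurable g) (hh : Measurable h) :
    ∫⁻ a, ENNReal.ofReal (g a * h a) ∂μ
      = ∫⁻ m in Ioi 0, ∫⁻ u in Ioi 0, μ {a | m < h a ∧ u < g a} := by
  -- `ofReal` does not see the negative part of `h`, and the layer-cake formula needs `0 ≤ h`.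
  calc ∫⁻ a, ENNReal.ofReal (g a * h a) ∂μ
      = ∫⁻ a, ENNReal.ofReal (max (h a) 0) ∂μ.withDensity fun a => ENNReal.ofReal (g a) := by
        rw [lintegral_withDensity_eq_lintegral_mul _ (by fun_prop) (by fun_prop)]
        refine lintegral_congr fun a => ?_
        rw [Pi.mul_apply, ← ENNReal.ofReal_mul (hg0 a)]
        rcases le_total (h a) 0 with hneg | hpos
        · rw [max_eq_right hneg, mul_zero, ENNReal.ofReal_zero,
            ENNReal.ofReal_of_nonpos (mul_nonpos_of_nonneg_of_nonpos (hg0 a) hneg)]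
        · rw [max_eq_left hpos]
    _ = ∫⁻ m in Ioi 0, (μ.withDensity fun a => ENNReal.ofReal (g a)) {a | m < max (h a) 0} :=
        lintegral_eq_lintegral_meas_lt _ (ae_of_all _ fun a => le_max_right _ _) (by fun_prop)
    _ = ∫⁻ m in Ioi 0, ∫⁻ u in Ioi 0, μ {a | m < h a ∧ u < g a} := by
        refine setLIntegral_congr_fun measurableSet_Ioi fun m hm => ?_
        have hset : {a | m < max (h a) 0} = {a | m < h a} := by
          ext a
          simp [not_lt.2 (mem_Ioi.1 hm).le]
        rw [hset, withDensity_apply _ (measurableSet_lt measurable_const hh),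
          lintegral_eq_lintegral_meas_lt _ (ae_of_all _ hg0) hg.aemeasurable]
        refine lintegral_congr fun u => ?_
        rw [Measure.restrict_apply (measurableSet_lt measurable_const hg), inter_comm]
        rfl

theorem sum_setLIntegral_setLIntegral_le {ι : Type*} {s : Finset ι}
    {φ ψ : ι → ℝ → ℝ → ℝ≥0∞} (hφ : ∀ k, Antitone (φ k)) (hφ' : ∀ k m, Antitone (φ k m))
    (hψ : ∀ k, Antitone (ψ k)) (hψ' : ∀ k m, Antitone (ψ k m))
    (hle : ∀ m > 0, ∀ u > 0, ∑ k ∈ s, φ k m u ≤ ∑ k ∈ s, ψ k m u) :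
    ∑ k ∈ s, ∫⁻ m in Ioi 0, ∫⁻ u in Ioi 0, φ k m u
      ≤ ∑ k ∈ s, ∫⁻ m in Ioi 0, ∫⁻ u in Ioi 0, ψ k m u := by
  have houter {χ : ℝ → ℝ → ℝ≥0∞} (hχ : Antitone χ) : Measurable fun m => ∫⁻ u in Ioi 0, χ m u :=
    Antitone.measurable fun _ _ hab => lintegral_mono (hχ hab)
  rw [← lintegral_finsetSum s fun k _ => houter (hφ k),
    ← lintegral_finsetSum s fun k _ => houter (hψ k)]
  refine setLIntegral_mono' measurableSet_Ioi fun m hm => ?_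
  rw [← lintegral_finsetSum s fun k _ => (hφ' k m).measurable,
    ← lintegral_finsetSum s fun k _ => (hψ' k m).measurable]
  exact setLIntegral_mono' measurableSet_Ioi fun u hu => hle m hm u hu

theorem sum_lintegral_ofReal_mul_le {ι α : Type*} [MeasurableSpace α] {s : Finset ι}
    {μ ν : ι → Measure α} {g : α → ℝ} {h h' : ι → α → ℝ} (hg0 : ∀ a, 0 ≤ g a) (hg : Measurable g)
    (hh : ∀ k, Measurable (h k)) (hh' : ∀ k, Measurable (h' k))
    (hle : ∀ m > 0, ∀ u > 0,
      ∑ k ∈ s, μ k {a | m < h k a ∧ u < g a} ≤ ∑ k ∈ s, ν k {a | m < h' k a ∧ u < g a}) :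
    ∑ k ∈ s, ∫⁻ a, ENNReal.ofReal (g a * h k a) ∂μ k
      ≤ ∑ k ∈ s, ∫⁻ a, ENNReal.ofReal (g a * h' k a) ∂ν k := by
  have hanti {ρ : Measure α} {f : α → ℝ} : Antitone fun m u => ρ {a | m < f a ∧ u < g a} :=
    fun _ _ hmm' _ => measure_mono fun _ ⟨hm, hu⟩ => ⟨hmm'.trans_lt hm, hu⟩
  have hanti' {ρ : Measure α} {f : α → ℝ} (m : ℝ) : Antitone fun u => ρ {a | m < f a ∧ u < g a} :=
    fun _ _ huu' => measure_mono fun _ ⟨hm, hu⟩ => ⟨hm, huu'.trans_lt hu⟩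
  simp only [lintegral_ofReal_mul_eq _ hg0 hg (hh _), lintegral_ofReal_mul_eq _ hg0 hg (hh' _)]
  exact sum_setLIntegral_setLIntegral_le (fun _ => hanti) (fun _ => hanti')
    (fun _ => hanti) (fun _ => hanti') hle

theorem lt_exp_neg_mul_iff {β u : ℝ} (hβ : 0 < β) (hu : 0 < u) (t : ℝ) :
    u < Real.exp (-β * t) ↔ t < -Real.log u / β := by
  rw [← Real.log_lt_iff_lt_exp hu, lt_div_iff₀ hβ]
  constructor <;> intro <;> linarith

theorem index_policy_optimal_deteriorating_general
    (d : ℕ) (β : ℝ) (hβ : 0 < β)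
    (Mlow : Fin d → ℝ → ℝ)
    (hManti : ∀ k, AntitoneOn (Mlow k) (Ici (0:ℝ)))
    (T That : Fin d → ℝ → ℝ)
    (hT0 : ∀ k, ∀ t : ℝ, t ≤ 0 → T k t = 0) (hThat0 : ∀ k, ∀ t : ℝ, t ≤ 0 → That k t = 0)
    (hTsum : ∀ t : ℝ, 0 ≤ t → ∑ k, T k t = t)
    (hThatsum : ∀ t : ℝ, 0 ≤ t → ∑ k, That k t = t)
    (hFTL : ∀ k, ∀ t : ℝ, 0 ≤ t → (∀ t' : ℝ, t < t' → That k t < That k t') →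
      Mlow k (That k t) = ⨆ j, Mlow j (That j t))
    (ST SThat : Fin d → StieltjesFunction ℝ)
    (hST : ∀ k (s : ℝ), ST k s = T k s) (hSThat : ∀ k (s : ℝ), SThat k s = That k s) :
    ∑ k, ∫⁻ t in Ici (0:ℝ),
        ENNReal.ofReal (Real.exp (-β * t) * Mlow k (T k t)) ∂(ST k).measure
      ≤ ∑ k, ∫⁻ t in Ici (0:ℝ),
          ENNReal.ofReal (Real.exp (-β * t) * Mlow k (That k t)) ∂(SThat k).measure := by
  obtain rfl : T = fun k => (ST k : ℝ → ℝ) := funext₂ fun k s => (hST k s).symm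
  obtain rfl : That = fun k => (SThat k : ℝ → ℝ) := funext₂ fun k s => (hSThat k s).symm
  have hT : IsAllocation ST := ⟨hT0, hTsum⟩
  have hThat : IsAllocation SThat := ⟨hThat0, hThatsum⟩
  refine sum_lintegral_ofReal_mul_le (fun t => (Real.exp_pos _).le) (by fun_prop)
    (fun k => (hT.antitone_comp hManti k).measurable)
    (fun k => (hThat.antitone_comp hManti k).measurable) fun m _ u hu => ?_
  simp only [Measure.restrict_apply' measurableSet_Ici, lt_exp_neg_mul_iff hβ hu]
  exact FollowsLeader.sum_measure_le hT hThat hManti hFTL m _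

/-- Lemma 4.2 of the paper, pathwise form.
For deteriorating reward rates `β·M̲^k` (nonincreasing, right-continuous, bounded),
any follow-the-leader allocation `T̂` dominates every allocation `T`:
`Σ_k ∫_0^∞ e^{-βt} M̲^k(T^k(t)) dT^k(t) ≤ Σ_k ∫_0^∞ e^{-βt} M̲^k(T̂^k(t)) dT̂^k(t)`. -/
theorem index_policy_optimal_deteriorating
    (d : ℕ) (hd : 1 ≤ d) (β : ℝ) (hβ : 0 < β)
    (Mlow : Fin d → ℝ → ℝ)
    (hMnonneg : ∀ k, ∀ s : ℝ, 0 ≤ s → 0 ≤ Mlow k s)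
    (hManti : ∀ k, AntitoneOn (Mlow k) (Ici (0:ℝ)))
    (hMrc : ∀ k, ∀ s : ℝ, 0 ≤ s → ContinuousWithinAt (Mlow k) (Ici s) s)
    (hMbdd : ∀ k, ∃ C : ℝ, ∀ s : ℝ, 0 ≤ s → Mlow k s ≤ C)
    (T That : Fin d → ℝ → ℝ)
    (hTmono : ∀ k, Monotone (T k)) (hThatmono : ∀ k, Monotone (That k))
    (hT0 : ∀ k, ∀ t : ℝ, t ≤ 0 → T k t = 0) (hThat0 : ∀ k, ∀ t : ℝ, t ≤ 0 → That k t = 0)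
    (hTsum : ∀ t : ℝ, 0 ≤ t → ∑ k, T k t = t)
    (hThatsum : ∀ t : ℝ, 0 ≤ t → ∑ k, That k t = t)
    (hFTL : ∀ k, ∀ t : ℝ, 0 ≤ t → (∀ t' : ℝ, t < t' → That k t < That k t') →
      Mlow k (That k t) = ⨆ j, Mlow j (That j t))
    (ST SThat : Fin d → StieltjesFunction ℝ)
    (hST : ∀ k (s : ℝ), ST k s = T k s) (hSThat : ∀ k (s : ℝ), SThat k s = That k s) :
    ∑ k, ∫⁻ t in Ici (0:ℝ),
        ENNReal.ofReal (Real.exp (-β * t) * Mlow k (T k t)) ∂(ST k).measure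
      ≤ ∑ k, ∫⁻ t in Ici (0:ℝ),
          ENNReal.ofReal (Real.exp (-β * t) * Mlow k (That k t)) ∂(SThat k).measure :=
  index_policy_optimal_deteriorating_general d β hβ Mlow hManti T That hT0 hThat0 hTsum hThatsum
    hFTL ST SThat hST hSThat
end
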